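/- arXiv:1108.2948 — 12 statements merged into one kernel-verified Lean document; each statement's English description precedes it below -/
import Mathlib

section
/- Let 0 < α < β < π and let x = e^{iα}, y = e^{iβ} be points of the unit circle in the upper half plane H². Let δ ∈ (0, π) be defined by cos δ = cos((β+α)/2)/cos((β−α)/2), and set z = e^{iδ}. Then z is the hyperbolic midpoint of x and y, i.e., ρ(x,z) = ρ(z,y) = ρ(x,y)/2. -/
open Complex ComplexConjugate

/-- Inverse hyperbolic cosine. -/
noncomputable def arcosh (c : ℝ) : ℝ := Real.log (c + Real.sqrt (c ^ 2 - 1))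

/-- Hyperbolic distance in the upper half plane `H² = {z : Im z > 0}`, determined by
`cosh (rhoH x y) = 1 + |x - y|^2 / (2 * Im x * Im y)`. -/
noncomputable def rhoH (x y : ℂ) : ℝ :=
  arcosh (1 + ‖x - y‖ ^ 2 / (2 * x.im * y.im))

/-- Hyperbolic distance in the unit disk `B² = {z : |z| < 1}`, determined by
`sinh (rhoB x y / 2) = |x - y| / (sqrt (1 - |x|^2) * sqrt (1 - |y|^2))`. -/
noncomputable def rhoB (x y : ℂ) : ℝ :=
  2 * Real.arsinh (‖x - y‖ /
    (Real.sqrt (1 - ‖x‖ ^ 2) * Real.sqrt (1 - ‖y‖ ^ 2)))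

/-- The Euclidean line through the points `p` and `q`, as a subset of `ℂ`. -/
def lineThrough (p q : ℂ) : Set ℂ := {z : ℂ | ∃ t : ℝ, z = p + t • (q - p)}

/-- The real inner product on `ℂ ≅ ℝ²`. -/
def dotR (p q : ℂ) : ℝ := p.re * q.re + p.im * q.im

/-!
The unit circle is a geodesic of `H²`, and `a ↦ log (tan (a / 2))` is hyperbolic arclength along
it: with `s = tan (a / 2)` and `t = tan (b / 2)` the half-angle formulas give
`cosh ρ(e^{ia}, e^{ib}) = (s / t + t / s) / 2 = cosh (log s - log t)`.
In half-angle tangents the condition on `δ` reads `tan² (δ / 2) = tan (α / 2) tan (β / 2)`,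
so the coordinate of `z` is the average of those of `x` and `y`.
-/

open Set
open scoped Real

lemma arcosh_cosh_eq_abs (t : ℝ) : arcosh (Real.cosh t) = |t| := by
  rw [← Real.cosh_abs]
  exact Real.arcosh_cosh (abs_nonneg t)

lemma norm_exp_mul_I_sub_exp_mul_I_sq (a b : ℝ) :
    ‖exp (a * I) - exp (b * I)‖ ^ 2 = 2 - 2 * Real.cos (a - b) := by
  rw [Complex.sq_norm, normSq_apply]
  simp only [sub_re, sub_im, exp_ofReal_mul_I_re, exp_ofReal_mul_I_im, Real.cos_sub]
  linear_combination Real.sin_sq_add_cos_sq a + Real.sin_sq_add_cos_sq b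

lemma tan_half_pos {a : ℝ} (ha : a ∈ Ioo 0 π) : 0 < Real.tan (a / 2) :=
  Real.tan_pos_of_pos_of_lt_pi_div_two (by linarith [ha.1]) (by linarith [ha.2])

lemma cos_eq_tan_half_of_mem_Ioo {a : ℝ} (ha : a ∈ Ioo 0 π) :
    Real.cos a = (1 - Real.tan (a / 2) ^ 2) / (1 + Real.tan (a / 2) ^ 2) := by
  refine Real.cos_eq_two_mul_tan_half_div_one_sub_tan_half_sq a fun h => ?_
  have := Real.cos_lt_cos_of_nonneg_of_le_pi ha.1.le le_rfl ha.2
  rw [Real.cos_pi] at this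
  linarith

noncomputable def logTanHalf (a : ℝ) : ℝ := Real.log (Real.tan (a / 2))

lemma rhoH_exp_mul_I {a b : ℝ} (ha : a ∈ Ioo 0 π) (hb : b ∈ Ioo 0 π) :
    rhoH (exp (a * I)) (exp (b * I)) = |logTanHalf a - logTanHalf b| := by
  have hs := tan_half_pos ha
  have ht := tan_half_pos hb
  suffices h : 1 + (2 - 2 * Real.cos (a - b)) / (2 * Real.sin a * Real.sin b) =
      Real.cosh (logTanHalf a - logTanHalf b) by
    rw [rhoH, norm_exp_mul_I_sub_exp_mul_I_sq, exp_ofReal_mul_I_im, exp_ofReal_mul_I_im, h,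
      arcosh_cosh_eq_abs]
  rw [Real.cosh_eq, Real.exp_neg, logTanHalf, logTanHalf, Real.exp_sub, Real.exp_log hs,
    Real.exp_log ht, Real.cos_sub, cos_eq_tan_half_of_mem_Ioo ha, cos_eq_tan_half_of_mem_Ioo hb,
    Real.sin_eq_two_mul_tan_half_div_one_add_tan_half_sq a,
    Real.sin_eq_two_mul_tan_half_div_one_add_tan_half_sq b]
  field_simp
  ring

lemma tan_half_sq_eq_mul_of_cos_eq {α β δ : ℝ} (hα : α ∈ Ioo 0 π) (hβ : β ∈ Ioo 0 π)
    (hδ : δ ∈ Ioo 0 π)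
    (hcos : Real.cos δ = Real.cos ((β + α) / 2) / Real.cos ((β - α) / 2)) :
    Real.tan (δ / 2) ^ 2 = Real.tan (α / 2) * Real.tan (β / 2) := by
  have hcα : 0 < Real.cos (α / 2) :=
    Real.cos_pos_of_mem_Ioo ⟨by linarith [hα.1, Real.pi_pos], by linarith [hα.2]⟩
  have hcβ : 0 < Real.cos (β / 2) :=
    Real.cos_pos_of_mem_Ioo ⟨by linarith [hβ.1, Real.pi_pos], by linarith [hβ.2]⟩
  have hcdiff : 0 < Real.cos ((β - α) / 2) :=
    Real.cos_pos_of_mem_Ioo ⟨by linarith [hα.2, hβ.1], by linarith [hα.1, hβ.2]⟩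
  set s := Real.tan (α / 2) with hs
  set t := Real.tan (β / 2) with ht
  have hst : 0 < s * t := mul_pos (tan_half_pos hα) (tan_half_pos hβ)
  have hquot : Real.cos ((β + α) / 2) / Real.cos ((β - α) / 2) = (1 - s * t) / (1 + s * t) := by
    rw [div_eq_div_iff hcdiff.ne' (by positivity), add_div, sub_div, Real.cos_add, Real.cos_sub,
      hs, ht, Real.tan_eq_sin_div_cos, Real.tan_eq_sin_div_cos]
    field_simp
  rw [cos_eq_tan_half_of_mem_Ioo hδ, hquot, div_eq_div_iff (by positivity) (by positivity)] at hcos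
  linarith

lemma two_mul_logTanHalf_eq_add_of_cos_eq {α β δ : ℝ} (hα : α ∈ Ioo 0 π)
    (hβ : β ∈ Ioo 0 π) (hδ : δ ∈ Ioo 0 π)
    (hcos : Real.cos δ = Real.cos ((β + α) / 2) / Real.cos ((β - α) / 2)) :
    2 * logTanHalf δ = logTanHalf α + logTanHalf β := by
  rw [logTanHalf, logTanHalf, logTanHalf,
    ← Real.log_mul (tan_half_pos hα).ne' (tan_half_pos hβ).ne',
    ← tan_half_sq_eq_mul_of_cos_eq hα hβ hδ hcos, Real.log_pow]
  norm_num

/-- For `x = e^{iα}`, `y = e^{iβ}` with `0 < α < β < π`, the point `z = e^{iδ}` with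
`δ ∈ (0, π)` and `cos δ = cos ((β+α)/2) / cos ((β-α)/2)` is the hyperbolic midpoint
of `x` and `y` in the upper half plane. -/
theorem midpoint_on_unit_circle_H2 (α β δ : ℝ)
    (hα : 0 < α) (hαβ : α < β) (hβ : β < Real.pi)
    (x y z : ℂ) (hx : x = Complex.exp (α * Complex.I))
    (hy : y = Complex.exp (β * Complex.I))
    (hδ : δ ∈ Set.Ioo 0 Real.pi)
    (hcos : Real.cos δ = Real.cos ((β + α) / 2) / Real.cos ((β - α) / 2))
    (hz : z = Complex.exp (δ * Complex.I)) :
    rhoH x z = rhoH z y ∧ rhoH z y = rhoH x y / 2 := by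
  have hαI : α ∈ Ioo 0 π := ⟨hα, hαβ.trans hβ⟩
  have hβI : β ∈ Ioo 0 π := ⟨hα.trans hαβ, hβ⟩
  have hmid := two_mul_logTanHalf_eq_add_of_cos_eq hαI hβI hδ hcos
  subst hx hy hz
  rw [rhoH_exp_mul_I hαI hδ, rhoH_exp_mul_I hδ hβI, rhoH_exp_mul_I hαI hβI]
  have hleft : logTanHalf α - logTanHalf δ = (logTanHalf α - logTanHalf β) / 2 := by linarith
  have hright : logTanHalf δ - logTanHalf β = (logTanHalf α - logTanHalf β) / 2 := by linarith
  rw [hleft, hright, abs_div, abs_two]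
  exact ⟨rfl, rfl⟩
end

section
/- Let 0 < α < β < π with α + β ≠ π, let x = e^{iα}, y = e^{iβ}, and let z = e^{iδ} with δ ∈ (0,π), cos δ = cos((β+α)/2)/cos((β−α)/2), be the hyperbolic midpoint of x and y in H². Let w be the intersection of the Euclidean line through x and y with the real axis. Then the Euclidean line through w and z is tangent to the unit circle at z; equivalently, (Re w)(Re z) = 1. -/
/-! Writing `x = e^{i(θ-φ)}`, `y = e^{i(θ+φ)}`, the chord `xy` meets the real axis at
`cos φ / cos θ`, while the midpoint has real part `cos θ / cos φ`; hence `Re w · Re z = 1`.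
For real `w` and unit `z` this is exactly `⟨w - z, z⟩ = 0`, i.e. tangency at `z`. -/

open Complex ComplexConjugate

theorem re_mul_cos_half_add_of_mem_lineThrough (α β : ℝ) {w : ℂ}
    (hw : w ∈ lineThrough (exp (α * I)) (exp (β * I))) (him : w.im = 0) :
    w.re * Real.cos ((β + α) / 2) = Real.cos ((β - α) / 2) := by
  obtain ⟨t, rfl⟩ := hw
  obtain ⟨θ, φ, rfl, rfl⟩ : ∃ θ φ : ℝ, α = θ - φ ∧ β = θ + φ :=
    ⟨(β + α) / 2, (β - α) / 2, by ring, by ring⟩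
  have hθ : (θ + φ + (θ - φ)) / 2 = θ := by ring
  have hφ : (θ + φ - (θ - φ)) / 2 = φ := by ring
  simp only [hθ, hφ, add_re, add_im, real_smul, re_ofReal_mul, im_ofReal_mul, sub_re, sub_im,
    exp_ofReal_mul_I_re, exp_ofReal_mul_I_im, Real.cos_add, Real.cos_sub, Real.sin_add,
    Real.sin_sub] at him ⊢
  linear_combination (-Real.sin θ) * him + Real.cos φ * Real.sin_sq_add_cos_sq θ

theorem dotR_sub_self_eq_zero_iff {w z : ℂ} (hw : w.im = 0) (hz : ‖z‖ = 1) :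
    dotR (w - z) z = 0 ↔ w.re * z.re = 1 := by
  have hz' : z.re * z.re + z.im * z.im = 1 := by
    rw [← normSq_apply, ← Complex.sq_norm, hz, one_pow]
  simp only [dotR, sub_re, sub_im, hw]
  constructor <;> intro h <;> linarith

theorem tangent_line_through_w_and_midpoint_general (α β δ : ℝ)
    (hα : 0 < α) (hαβ : α < β) (hβ : β < Real.pi)
    (x y z : ℂ) (hx : x = Complex.exp (α * Complex.I))
    (hy : y = Complex.exp (β * Complex.I))
    (hcos : Real.cos δ = Real.cos ((β + α) / 2) / Real.cos ((β - α) / 2))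
    (hz : z = Complex.exp (δ * Complex.I))
    (w : ℂ) (hw1 : w ∈ lineThrough x y) (hw2 : w.im = 0) :
    dotR (w - z) z = 0 ∧ w.re * z.re = 1 := by
  subst hx hy hz
  have hc : Real.cos ((β - α) / 2) ≠ 0 :=
    (Real.cos_pos_of_mem_Ioo ⟨by linarith, by linarith⟩).ne'
  have hwz : w.re * (exp (δ * I)).re = 1 := by
    rw [exp_ofReal_mul_I_re, hcos, mul_div_assoc', div_eq_one_iff_eq hc]
    exact re_mul_cos_half_add_of_mem_lineThrough α β hw1 hw2
  exact ⟨(dotR_sub_self_eq_zero_iff hw2 (norm_exp_ofReal_mul_I δ)).2 hwz, hwz⟩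

/-- If `w` is the intersection of the Euclidean line through `x = e^{iα}` and `y = e^{iβ}`
with the real axis, and `z` is the hyperbolic midpoint of `x` and `y`, then the line
through `w` and `z` is tangent to the unit circle at `z` (it is perpendicular to the
radius `[0, z]`); equivalently `Re w * Re z = 1`. -/
theorem tangent_line_through_w_and_midpoint (α β δ : ℝ)
    (hα : 0 < α) (hαβ : α < β) (hβ : β < Real.pi) (hne : α + β ≠ Real.pi)
    (x y z : ℂ) (hx : x = Complex.exp (α * Complex.I))
    (hy : y = Complex.exp (β * Complex.I))
    (hδ : δ ∈ Set.Ioo 0 Real.pi)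
    (hcos : Real.cos δ = Real.cos ((β + α) / 2) / Real.cos ((β - α) / 2))
    (hz : z = Complex.exp (δ * Complex.I))
    (w : ℂ) (hw1 : w ∈ lineThrough x y) (hw2 : w.im = 0) :
    dotR (w - z) z = 0 ∧ w.re * z.re = 1 :=
  tangent_line_through_w_and_midpoint_general α β δ hα hαβ hβ x y z hx hy hcos hz w hw1 hw2
end

section
/- Let 0 < α < β < π, let x = e^{iα}, y = e^{iβ}, and let z = e^{iδ} with δ ∈ (0,π), cos δ = cos((β+α)/2)/cos((β−α)/2), be the hyperbolic midpoint of x and y in H². Let v be the intersection point of the Euclidean line through x and 1 with the Euclidean line through y and −1 (here 1 and −1 are the endpoints on the real axis of the unit circle arc containing x and y). Then Re v = Re z, i.e., the line through v and z is orthogonal to the real axis ∂H². -/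
open Complex ComplexConjugate

/-!
The chord of the unit circle from `e^{iθ}` to `e^{iφ}` is perpendicular to the bisecting
direction `e^{i(θ+φ)/2}`, so it is the level set `⟨p, e^{i(θ+φ)/2}⟩ = cos ((θ-φ)/2)`.
Writing `α = 2u`, `β = 2w`, the two chords through `v` give the linear system
`X cos u + Y sin u = cos u`, `-X sin w + Y cos w = sin w` for `v = X + iY`, and Cramer's
rule yields `X = cos (w + u) / cos (w - u)`, which is `cos δ = Re z`.
-/

lemma dotR_eq_of_mem_lineThrough {p a b n : ℂ} {c : ℝ} (ha : dotR a n = c) (hb : dotR b n = c)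
    (hp : p ∈ lineThrough a b) : dotR p n = c := by
  obtain ⟨t, rfl⟩ := hp
  simp only [dotR, add_re, add_im, sub_re, sub_im, real_smul, mul_re, mul_im, ofReal_re,
    ofReal_im, zero_mul, sub_zero, add_zero] at ha hb ⊢
  linear_combination (1 - t) * ha + t * hb

lemma dotR_exp_mul_I (p : ℂ) (μ : ℝ) :
    dotR p (exp (μ * I)) = p.re * Real.cos μ + p.im * Real.sin μ := by
  rw [dotR, exp_ofReal_mul_I_re, exp_ofReal_mul_I_im]

lemma dotR_exp_mul_I_exp_mul_I (θ μ : ℝ) :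
    dotR (exp (θ * I)) (exp (μ * I)) = Real.cos (θ - μ) := by
  rw [dotR_exp_mul_I, exp_ofReal_mul_I_re, exp_ofReal_mul_I_im, Real.cos_sub]

lemma dotR_exp_bisector_of_mem_lineThrough {p : ℂ} {θ φ : ℝ}
    (hp : p ∈ lineThrough (exp (θ * I)) (exp (φ * I))) :
    dotR p (exp (↑((θ + φ) / 2) * I)) = Real.cos ((θ - φ) / 2) := by
  refine dotR_eq_of_mem_lineThrough ?_ ?_ hp <;> rw [dotR_exp_mul_I_exp_mul_I]
  · ring_nf
  · rw [← Real.cos_neg]; ring_nf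

theorem vertical_line_through_v_and_midpoint_general (α β δ : ℝ)
    (hα : 0 < α) (hαβ : α < β) (hβ : β < Real.pi)
    (x y z : ℂ) (hx : x = Complex.exp (α * Complex.I))
    (hy : y = Complex.exp (β * Complex.I))
    (hcos : Real.cos δ = Real.cos ((β + α) / 2) / Real.cos ((β - α) / 2))
    (hz : z = Complex.exp (δ * Complex.I))
    (v : ℂ) (hv1 : v ∈ lineThrough x 1) (hv2 : v ∈ lineThrough y (-1)) :
    v.re = z.re := by
  rw [hx, ← exp_zero, ← zero_mul I, ← ofReal_zero] at hv1
  rw [hy, ← exp_pi_mul_I] at hv2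
  have hchord₁ : v.re * Real.cos (α / 2) + v.im * Real.sin (α / 2) = Real.cos (α / 2) := by
    simpa only [dotR_exp_mul_I, add_zero, sub_zero] using
      dotR_exp_bisector_of_mem_lineThrough hv1
  have hchord₂ : -(v.re * Real.sin (β / 2)) + v.im * Real.cos (β / 2) = Real.sin (β / 2) := by
    have h := dotR_exp_bisector_of_mem_lineThrough hv2
    rwa [dotR_exp_mul_I, add_div, sub_div, Real.cos_add_pi_div_two, Real.sin_add_pi_div_two,
      Real.cos_sub_pi_div_two, mul_neg] at h
  have hdet : Real.cos ((β - α) / 2) ≠ 0 :=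
    (Real.cos_pos_of_mem_Ioo ⟨by linarith, by linarith⟩).ne'
  rw [hz, exp_ofReal_mul_I_re, hcos, eq_div_iff hdet, add_div, sub_div, Real.cos_add,
    Real.cos_sub]
  linear_combination Real.cos (β / 2) * hchord₁ - Real.sin (α / 2) * hchord₂

/-- If `v` is the intersection of the line through `x = e^{iα}` and `1` with the line
through `y = e^{iβ}` and `-1`, and `z` is the hyperbolic midpoint of `x` and `y`, then
`Re v = Re z`, i.e. the line through `v` and `z` is orthogonal to the real axis. -/
theorem vertical_line_through_v_and_midpoint (α β δ : ℝ)
    (hα : 0 < α) (hαβ : α < β) (hβ : β < Real.pi)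
    (x y z : ℂ) (hx : x = Complex.exp (α * Complex.I))
    (hy : y = Complex.exp (β * Complex.I))
    (hδ : δ ∈ Set.Ioo 0 Real.pi)
    (hcos : Real.cos δ = Real.cos ((β + α) / 2) / Real.cos ((β - α) / 2))
    (hz : z = Complex.exp (δ * Complex.I))
    (v : ℂ) (hv1 : v ∈ lineThrough x 1) (hv2 : v ∈ lineThrough y (-1)) :
    v.re = z.re :=
  vertical_line_through_v_and_midpoint_general α β δ hα hαβ hβ x y z hx hy hcos hz v hv1 hv2
end

section
/- Let 0 < α < β < π, let x = e^{iα}, y = e^{iβ}, and let z = e^{iδ} with δ ∈ (0,π), cos δ = cos((β+α)/2)/cos((β−α)/2), be the hyperbolic midpoint of x and y in H². Let a = i(y(1+|x|²) − x(1+|y|²))/(2(x₂y₁ − x₁y₂)), where x = x₁+ix₂, y = y₁+iy₂; then a = e^{i(β+α)/2}/cos((β−α)/2) and Re a = Re z, i.e., the line through a and z is orthogonal to the real axis ∂H². -/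
open Complex ComplexConjugate

theorem exp_add_mul_I_sub_exp_sub_mul_I (θ φ : ℂ) :
    exp ((θ + φ) * I) - exp ((θ - φ) * I) = 2 * I * sin φ * exp (θ * I) := by
  rw [add_mul, sub_mul, exp_add, exp_sub, Complex.sin, neg_mul, exp_neg]
  ring_nf
  rw [I_sq]
  ring

theorem exp_mul_I_sub_exp_mul_I (α β : ℝ) :
    exp (β * I) - exp (α * I) =
      2 * I * Real.sin ((β - α) / 2) * exp (((β + α) / 2 : ℝ) * I) := by
  push_cast
  rw [← exp_add_mul_I_sub_exp_sub_mul_I]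
  ring_nf

theorem exp_mul_I_im_mul_re_sub_re_mul_im (α β : ℝ) :
    (exp (α * I)).im * (exp (β * I)).re - (exp (α * I)).re * (exp (β * I)).im =
      Real.sin (α - β) := by
  simp only [exp_ofReal_mul_I_re, exp_ofReal_mul_I_im, Real.sin_sub]

noncomputable def orthogonalCircleCenter (x y : ℂ) : ℂ :=
  I * (y * (1 + (‖x‖ : ℂ) ^ 2) - x * (1 + (‖y‖ : ℂ) ^ 2)) /
    ((2 * (x.im * y.re - x.re * y.im) : ℝ) : ℂ)

/-- Writing `y - x = 2i sin φ · e^{iθ}` and `sin (α - β) = -2 sin φ cos φ` with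
`θ = (β + α) / 2`, `φ = (β - α) / 2`, the factor `sin φ` cancels. -/
theorem orthogonalCircleCenter_exp_mul_I (α β : ℝ) (h : Real.sin (β - α) ≠ 0) :
    orthogonalCircleCenter (exp (α * I)) (exp (β * I)) =
      exp (((β + α) / 2 : ℝ) * I) / (Real.cos ((β - α) / 2) : ℂ) := by
  have hβα : β - α = 2 * ((β - α) / 2) := by ring
  rw [hβα, Real.sin_two_mul] at h
  have hsin : Real.sin ((β - α) / 2) ≠ 0 := by intro h0; simp [h0] at h
  have hcos : Real.cos ((β - α) / 2) ≠ 0 := by intro h0; simp [h0] at h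
  have hden : Real.sin (α - β) = -(2 * Real.sin ((β - α) / 2) * Real.cos ((β - α) / 2)) := by
    rw [← Real.sin_two_mul, ← Real.sin_neg]
    ring_nf
  have hden0 : 2 * Real.sin (α - β) ≠ 0 := by simp [hden, hsin, hcos]
  have hnum : exp (β * I) * (1 + (‖exp (α * I)‖ : ℂ) ^ 2)
      - exp (α * I) * (1 + (‖exp (β * I)‖ : ℂ) ^ 2) = 2 * (exp (β * I) - exp (α * I)) := by
    simp only [norm_exp_ofReal_mul_I, ofReal_one]
    ring
  rw [orthogonalCircleCenter, hnum, exp_mul_I_sub_exp_mul_I, exp_mul_I_im_mul_re_sub_re_mul_im,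
    div_eq_div_iff (by exact_mod_cast hden0) (by exact_mod_cast hcos), hden]
  push_cast
  ring_nf
  rw [I_sq]
  ring

theorem vertical_line_through_a_and_midpoint_general (α β δ : ℝ)
    (hα : 0 < α) (hαβ : α < β) (hβ : β < Real.pi)
    (x y z : ℂ) (hx : x = Complex.exp (α * Complex.I))
    (hy : y = Complex.exp (β * Complex.I))
    (hcos : Real.cos δ = Real.cos ((β + α) / 2) / Real.cos ((β - α) / 2))
    (hz : z = Complex.exp (δ * Complex.I))
    (a : ℂ)
    (ha : a = Complex.I * (y * (1 + (‖x‖ : ℂ) ^ 2)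
        - x * (1 + (‖y‖ : ℂ) ^ 2))
        / ((2 * (x.im * y.re - x.re * y.im) : ℝ) : ℂ)) :
    a = Complex.exp (((β + α) / 2 : ℝ) * Complex.I) / ((Real.cos ((β - α) / 2) : ℝ) : ℂ)
      ∧ a.re = z.re := by
  subst hx hy hz
  have hsin : Real.sin (β - α) ≠ 0 :=
    (Real.sin_pos_of_pos_of_lt_pi (by linarith) (by linarith)).ne'
  have ha' : a = exp (((β + α) / 2 : ℝ) * I) / (Real.cos ((β - α) / 2) : ℂ) :=
    ha.trans (orthogonalCircleCenter_exp_mul_I α β hsin)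
  refine ⟨ha', ?_⟩
  rw [ha', div_ofReal_re, exp_ofReal_mul_I_re, exp_ofReal_mul_I_re, hcos]

/-- For `x = e^{iα}`, `y = e^{iβ}`, the center `a` of the circle through `x`, `y`
orthogonal to the unit circle satisfies `a = e^{i(β+α)/2} / cos ((β-α)/2)` and
`Re a = Re z`, where `z` is the hyperbolic midpoint of `x` and `y`. -/
theorem vertical_line_through_a_and_midpoint (α β δ : ℝ)
    (hα : 0 < α) (hαβ : α < β) (hβ : β < Real.pi)
    (x y z : ℂ) (hx : x = Complex.exp (α * Complex.I))
    (hy : y = Complex.exp (β * Complex.I))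
    (hδ : δ ∈ Set.Ioo 0 Real.pi)
    (hcos : Real.cos δ = Real.cos ((β + α) / 2) / Real.cos ((β - α) / 2))
    (hz : z = Complex.exp (δ * Complex.I))
    (a : ℂ)
    (ha : a = Complex.I * (y * (1 + (‖x‖ : ℂ) ^ 2)
        - x * (1 + (‖y‖ : ℂ) ^ 2))
        / ((2 * (x.im * y.re - x.re * y.im) : ℝ) : ℂ)) :
    a = Complex.exp (((β + α) / 2 : ℝ) * Complex.I) / ((Real.cos ((β - α) / 2) : ℝ) : ℂ)
      ∧ a.re = z.re :=
  vertical_line_through_a_and_midpoint_general α β δ hα hαβ hβ x y z hx hy hcos hz a ha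
end

section
/- Let 0 < α < β < π, let x = e^{iα}, y = e^{iβ}, let a = e^{i(β+α)/2}/cos((β−α)/2) and r_a = tan((β−α)/2) (so that the circle S¹(a,r_a) passes through x and y and is orthogonal to the unit circle). Let v be the intersection point of the line through x and 1 with the line through y and −1. Then v lies on the circle S¹(a,r_a), i.e., |v − a| = r_a. -/
open Complex ComplexConjugate

/-! The chord of the unit circle through `e^{iθ}` and `e^{iφ}` is the level set
`{z | ⟪z, e^{i(θ+φ)/2}⟫ = cos ((θ - φ) / 2)}`. Hence `v` is the solution of two linear equations
with normals `e^{iα/2}` and `e^{i(β+π)/2}`, which are independent because the angle between them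
is `(β - α) / 2 + π / 2`. The top point `a + i r_a` of the circle solves both equations, so
`v = a + i r_a`. -/

lemma dotR_eq_of_mem_lineThrough_s7 {p q z : ℂ} (n : ℂ) {c : ℝ} (hp : dotR p n = c)
    (hq : dotR q n = c) (hz : z ∈ lineThrough p q) : dotR z n = c := by
  obtain ⟨t, rfl⟩ := hz
  unfold dotR at *
  simp only [add_re, add_im, real_smul, mul_re, mul_im, ofReal_re, ofReal_im, sub_re, sub_im]
  linear_combination (1 - t) * hp + t * hq

lemma eq_of_dotR_eq_of_dotR_eq {z w n m : ℂ} (hnm : n.re * m.im - n.im * m.re ≠ 0)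
    (hn : dotR z n = dotR w n) (hm : dotR z m = dotR w m) : z = w := by
  unfold dotR at hn hm
  apply Complex.ext
  · apply mul_right_cancel₀ hnm
    linear_combination m.im * hn - n.im * hm
  · apply mul_right_cancel₀ hnm
    linear_combination n.re * hm - m.re * hn

lemma dotR_exp_mul_I_s7 (θ ψ : ℝ) : dotR (exp (θ * I)) (exp (ψ * I)) = Real.cos (θ - ψ) := by
  simp only [dotR, exp_ofReal_mul_I_re, exp_ofReal_mul_I_im, Real.cos_sub]

lemma exp_mul_I_re_mul_im_sub (θ φ : ℝ) :
    (exp (θ * I)).re * (exp (φ * I)).im - (exp (θ * I)).im * (exp (φ * I)).re =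
      Real.sin (φ - θ) := by
  simp only [exp_ofReal_mul_I_re, exp_ofReal_mul_I_im, Real.sin_sub]
  ring

lemma dotR_of_mem_lineThrough_exp {θ φ : ℝ} {z : ℂ}
    (hz : z ∈ lineThrough (exp (θ * I)) (exp (φ * I))) :
    dotR z (exp (((θ + φ) / 2 : ℝ) * I)) = Real.cos ((θ - φ) / 2) := by
  refine dotR_eq_of_mem_lineThrough_s7 _ ?_ ?_ hz <;> rw [dotR_exp_mul_I_s7]
  · ring_nf
  · rw [← Real.cos_neg]
    ring_nf

lemma dotR_exp_div_add_mul_I (γ c r ψ : ℝ) :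
    dotR (exp (γ * I) / (c : ℂ) + r * I) (exp (ψ * I)) =
      Real.cos (γ - ψ) / c + r * Real.sin ψ := by
  simp only [dotR, add_re, add_im, div_ofReal_re, div_ofReal_im, mul_re, mul_im, ofReal_re,
    ofReal_im, I_re, I_im, exp_ofReal_mul_I_re, exp_ofReal_mul_I_im, Real.cos_sub]
  ring

section CircleTop

variable {α β : ℝ}

lemma dotR_circle_top_exp_half (hc : Real.cos ((β - α) / 2) ≠ 0) :
    dotR (exp (((β + α) / 2 : ℝ) * I) / (Real.cos ((β - α) / 2) : ℂ) +
      Real.tan ((β - α) / 2) * I) (exp ((α / 2 : ℝ) * I)) = Real.cos (α / 2) := by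
  rw [dotR_exp_div_add_mul_I, Real.tan_eq_sin_div_cos,
    show (β + α) / 2 - α / 2 = α / 2 + (β - α) / 2 by ring, Real.cos_add]
  field_simp
  ring

lemma dotR_circle_top_exp_half_add_pi (hc : Real.cos ((β - α) / 2) ≠ 0) :
    dotR (exp (((β + α) / 2 : ℝ) * I) / (Real.cos ((β - α) / 2) : ℂ) +
      Real.tan ((β - α) / 2) * I) (exp (((β + Real.pi) / 2 : ℝ) * I)) =
      Real.cos ((β - Real.pi) / 2) := by
  rw [dotR_exp_div_add_mul_I, Real.tan_eq_sin_div_cos,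
    show (β + α) / 2 - (β + Real.pi) / 2 = α / 2 - Real.pi / 2 by ring,
    show (β + Real.pi) / 2 = (α / 2 + (β - α) / 2) + Real.pi / 2 by ring,
    show (β - Real.pi) / 2 = (α / 2 + (β - α) / 2) - Real.pi / 2 by ring,
    Real.cos_sub_pi_div_two, Real.cos_sub_pi_div_two, Real.sin_add_pi_div_two,
    Real.sin_add, Real.cos_add]
  field_simp
  linear_combination -Real.sin (α / 2) * Real.sin_sq_add_cos_sq ((β - α) / 2)

end CircleTop

/-- For `x = e^{iα}`, `y = e^{iβ}` with `0 < α < β < π`, the intersection point `v` of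
the line through `x` and `1` with the line through `y` and `-1` lies on the circle with
center `a = e^{i(β+α)/2} / cos((β-α)/2)` and radius `r_a = tan((β-α)/2)`. -/
theorem v_on_orthogonal_circle (α β : ℝ)
    (hα : 0 < α) (hαβ : α < β) (hβ : β < Real.pi)
    (x y : ℂ) (hx : x = Complex.exp (α * Complex.I))
    (hy : y = Complex.exp (β * Complex.I))
    (a : ℂ) (ra : ℝ)
    (ha : a = Complex.exp (((β + α) / 2 : ℝ) * Complex.I) / ((Real.cos ((β - α) / 2) : ℝ) : ℂ))
    (hra : ra = Real.tan ((β - α) / 2))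
    (v : ℂ) (hv1 : v ∈ lineThrough x 1) (hv2 : v ∈ lineThrough y (-1)) :
    ‖v - a‖ = ra := by
  have hcos : 0 < Real.cos ((β - α) / 2) := Real.cos_pos_of_mem_Ioo ⟨by linarith, by linarith⟩
  have htan : 0 ≤ Real.tan ((β - α) / 2) :=
    Real.tan_nonneg_of_nonneg_of_le_pi_div_two (by linarith) (by linarith)
  have h1 := dotR_of_mem_lineThrough_exp (θ := α) (φ := 0)
    (by rwa [ofReal_zero, zero_mul, exp_zero, ← hx])
  simp only [add_zero, sub_zero] at h1
  have h2 := dotR_of_mem_lineThrough_exp (θ := β) (φ := Real.pi)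
    (by rwa [exp_pi_mul_I, ← hy])
  have hv : v = a + ra * I := by
    refine eq_of_dotR_eq_of_dotR_eq ?_ (h1.trans ?_) (h2.trans ?_)
    · rw [exp_mul_I_re_mul_im_sub,
        show (β + Real.pi) / 2 - α / 2 = (β - α) / 2 + Real.pi / 2 by ring,
        Real.sin_add_pi_div_two]
      exact hcos.ne'
    · rw [ha, hra, dotR_circle_top_exp_half hcos.ne']
    · rw [ha, hra, dotR_circle_top_exp_half_add_pi hcos.ne']
  rw [hv, add_sub_cancel_left, norm_mul, norm_I, mul_one, norm_real,
    Real.norm_of_nonneg (hra ▸ htan)]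
end

section
/- Let 0 < α < β < π with α + β ≠ π, let x = e^{iα}, y = e^{iβ}, let a = e^{i(β+α)/2}/cos((β−α)/2), r_a = tan((β−α)/2), and let w be the real number cos((β−α)/2)/cos((β+α)/2) (the intersection of the line through x and y with the real axis). Then the circle S¹(a,r_a) is orthogonal to the circle S¹(w/2,|w|/2); equivalently r_a² + (|w|/2)² = |a − w/2|², equivalently a·w = 1 where a·w denotes the real inner product (Re a)(Re w) + (Im a)(Im w). -/
open Complex ComplexConjugate

/-!
Write `c₁ = cos((β-α)/2)` and `c₂ = cos((β+α)/2)`. Then `‖a‖² = 1/c₁² = 1 + r_a²`, i.e.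
`S¹(a, r_a)` is orthogonal to the unit circle, and `a · w = (c₂/c₁)(c₁/c₂) = 1`. Expanding
`‖a - w/2‖² = ‖a‖² - a · w + ‖w‖²/4` turns these two facts into the orthogonality relation.
-/

theorem Real.cos_ne_zero_of_mem_Ioo_of_ne_pi_div_two {θ : ℝ} (hθ : θ ∈ Set.Ioo 0 Real.pi)
    (hne : θ ≠ Real.pi / 2) : Real.cos θ ≠ 0 := by
  rcases hne.lt_or_gt with hlt | hgt
  · exact (Real.cos_pos_of_mem_Ioo ⟨by linarith [hθ.1], hlt⟩).ne'
  · exact (Real.cos_neg_of_pi_div_two_lt_of_lt hgt (by linarith [hθ.2])).ne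

theorem sq_norm_exp_mul_I_div_cos (θ φ : ℝ) (hφ : Real.cos φ ≠ 0) :
    ‖Complex.exp (θ * Complex.I) / ((Real.cos φ : ℝ) : ℂ)‖ ^ 2 = 1 + Real.tan φ ^ 2 := by
  rw [norm_div, Complex.norm_exp_ofReal_mul_I, Complex.norm_real, Real.norm_eq_abs, div_pow,
    sq_abs, ← Real.inv_one_add_tan_sq hφ, one_pow, div_inv_eq_mul, one_mul]

theorem dotR_exp_mul_I_div_cos (θ φ : ℝ) (hφ : Real.cos φ ≠ 0) (hθ : Real.cos θ ≠ 0) :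
    dotR (Complex.exp (θ * Complex.I) / ((Real.cos φ : ℝ) : ℂ))
      ((Real.cos φ / Real.cos θ : ℝ) : ℂ) = 1 := by
  rw [dotR, Complex.div_ofReal_re, Complex.exp_ofReal_mul_I_re, Complex.ofReal_re,
    Complex.ofReal_im, mul_zero, add_zero]
  field_simp

theorem sq_add_sq_half_norm_eq_sq_norm_sub_half (a w : ℂ) (r : ℝ) (ha : ‖a‖ ^ 2 = 1 + r ^ 2)
    (haw : dotR a w = 1) : r ^ 2 + (‖w‖ / 2) ^ 2 = ‖a - w / 2‖ ^ 2 := by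
  rw [dotR] at haw
  rw [div_pow]
  simp only [Complex.sq_norm, Complex.normSq_apply, Complex.sub_re, Complex.sub_im,
    Complex.div_ofNat_re, Complex.div_ofNat_im] at ha ⊢
  linear_combination haw - ha

theorem orthogonal_circles_a_w_general (α β : ℝ)
    (hα : 0 < α) (hαβ : α < β) (hβ : β < Real.pi) (hne : α + β ≠ Real.pi)
    (a : ℂ) (ra : ℝ)
    (ha : a = Complex.exp (((β + α) / 2 : ℝ) * Complex.I) / ((Real.cos ((β - α) / 2) : ℝ) : ℂ))
    (hra : ra = Real.tan ((β - α) / 2))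
    (w : ℝ) (hw : w = Real.cos ((β - α) / 2) / Real.cos ((β + α) / 2)) :
    ra ^ 2 + (|w| / 2) ^ 2 = ‖a - (w : ℂ) / 2‖ ^ 2 ∧ dotR a (w : ℂ) = 1 := by
  have hc₁ : Real.cos ((β - α) / 2) ≠ 0 :=
    (Real.cos_pos_of_mem_Ioo ⟨by linarith, by linarith⟩).ne'
  have hc₂ : Real.cos ((β + α) / 2) ≠ 0 :=
    Real.cos_ne_zero_of_mem_Ioo_of_ne_pi_div_two ⟨by linarith, by linarith⟩
      fun h ↦ hne (by linarith)
  subst ha hra hw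
  have hdot := dotR_exp_mul_I_div_cos _ _ hc₁ hc₂
  refine ⟨?_, hdot⟩
  simpa only [Complex.norm_real, Real.norm_eq_abs] using
    sq_add_sq_half_norm_eq_sq_norm_sub_half _ _ _ (sq_norm_exp_mul_I_div_cos _ _ hc₁) hdot

/-- For `x = e^{iα}`, `y = e^{iβ}` with `α + β ≠ π`, the circle `S¹(a, r_a)` with
`a = e^{i(β+α)/2} / cos((β-α)/2)`, `r_a = tan((β-α)/2)` is orthogonal to the circle
`S¹(w/2, |w|/2)` where `w = cos((β-α)/2) / cos((β+α)/2)`; equivalently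
`r_a² + (|w|/2)² = |a - w/2|²`, equivalently `a · w = 1` (real inner product). -/
theorem orthogonal_circles_a_w (α β : ℝ)
    (hα : 0 < α) (hαβ : α < β) (hβ : β < Real.pi) (hne : α + β ≠ Real.pi)
    (x y : ℂ) (hx : x = Complex.exp (α * Complex.I))
    (hy : y = Complex.exp (β * Complex.I))
    (a : ℂ) (ra : ℝ)
    (ha : a = Complex.exp (((β + α) / 2 : ℝ) * Complex.I) / ((Real.cos ((β - α) / 2) : ℝ) : ℂ))
    (hra : ra = Real.tan ((β - α) / 2))
    (w : ℝ) (hw : w = Real.cos ((β - α) / 2) / Real.cos ((β + α) / 2)) :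
    ra ^ 2 + (|w| / 2) ^ 2 = ‖a - (w : ℂ) / 2‖ ^ 2 ∧ dotR a (w : ℂ) = 1 :=
  orthogonal_circles_a_w_general α β hα hαβ hβ hne a ra ha hra w hw
end

section
/- Let 0 < α < β < π, let x = e^{iα}, y = e^{iβ}, let a = e^{i(β+α)/2}/cos((β−α)/2), r_a = tan((β−α)/2), and let v be the intersection of the line through x and 1 with the line through y and −1. Then the orthocenter p of the triangle with vertices v, 1, −1, namely p = Re v + i(1 − (Re v)²)/Im v, lies on the circle S¹(a,r_a), i.e., |p − a| = r_a. -/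
open Complex ComplexConjugate

/-!
With the half angles `φ = α / 2`, `ψ = β / 2`, the line through `e^{2iφ}` and `1` is
`(1 - Re z) cos φ = Im z sin φ` and the line through `e^{2iψ}` and `-1` is
`(Re z + 1) sin ψ = Im z cos ψ`. Solving, `v = (cos (ψ + φ) + 2i sin ψ cos φ) / cos (ψ - φ)`,
so `Re p = Re v = Re a`, and `cos² (ψ - φ) - cos² (ψ + φ) = sin 2ψ sin 2φ` gives
`Im p = 2 cos ψ sin φ / cos (ψ - φ)`. Hence `p - a = -i tan (ψ - φ)`.
-/

/-- The orthocenter of the triangle with vertices `v`, `1`, `-1`. -/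
noncomputable def orthocenterPM1 (v : ℂ) : ℂ :=
  (v.re : ℂ) + (((1 - v.re ^ 2) / v.im : ℝ) : ℂ) * I

theorem one_sub_re_mul_cos_half_eq_im_mul_sin_half {θ : ℝ} {v : ℂ}
    (hv : v ∈ lineThrough (exp (θ * I)) 1) :
    (1 - v.re) * Real.cos (θ / 2) = v.im * Real.sin (θ / 2) := by
  obtain ⟨t, rfl⟩ := hv
  obtain ⟨φ, rfl⟩ : ∃ φ, θ = 2 * φ := ⟨θ / 2, by ring⟩
  simp only [add_re, add_im, smul_re, smul_im, sub_re, sub_im, one_re, one_im,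
    exp_ofReal_mul_I_re, exp_ofReal_mul_I_im, smul_eq_mul, mul_div_cancel_left₀ φ two_ne_zero,
    Real.cos_two_mul, Real.sin_two_mul]
  linear_combination (-2 * (1 - t) * Real.cos φ) * Real.sin_sq_add_cos_sq φ

theorem re_add_one_mul_sin_half_eq_im_mul_cos_half {θ : ℝ} {v : ℂ}
    (hv : v ∈ lineThrough (exp (θ * I)) (-1)) :
    (v.re + 1) * Real.sin (θ / 2) = v.im * Real.cos (θ / 2) := by
  obtain ⟨t, rfl⟩ := hv
  obtain ⟨φ, rfl⟩ : ∃ φ, θ = 2 * φ := ⟨θ / 2, by ring⟩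
  simp only [add_re, add_im, smul_re, smul_im, sub_re, sub_im, neg_re, neg_im, one_re, one_im,
    exp_ofReal_mul_I_re, exp_ofReal_mul_I_im, smul_eq_mul, mul_div_cancel_left₀ φ two_ne_zero,
    Real.cos_two_mul, Real.sin_two_mul]
  ring

section HalfAngles

variable {φ ψ : ℝ} {v : ℂ}

theorem re_mul_cos_sub_eq_cos_add (h₁ : (1 - v.re) * Real.cos φ = v.im * Real.sin φ)
    (h₂ : (v.re + 1) * Real.sin ψ = v.im * Real.cos ψ) :
    v.re * Real.cos (ψ - φ) = Real.cos (ψ + φ) := by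
  rw [Real.cos_sub, Real.cos_add]
  linear_combination (-Real.cos ψ) * h₁ + Real.sin φ * h₂

theorem im_mul_cos_sub_eq_two_mul_sin_mul_cos
    (h₁ : (1 - v.re) * Real.cos φ = v.im * Real.sin φ)
    (h₂ : (v.re + 1) * Real.sin ψ = v.im * Real.cos ψ) :
    v.im * Real.cos (ψ - φ) = 2 * Real.sin ψ * Real.cos φ := by
  rw [Real.cos_sub]
  linear_combination (-Real.sin ψ) * h₁ - Real.cos φ * h₂

theorem orthocenterPM1_sub_eq_neg_tan_mul_I
    (hre : v.re * Real.cos (ψ - φ) = Real.cos (ψ + φ))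
    (him : v.im * Real.cos (ψ - φ) = 2 * Real.sin ψ * Real.cos φ)
    (hD : Real.cos (ψ - φ) ≠ 0) (hvim : v.im ≠ 0) :
    orthocenterPM1 v - exp ((ψ + φ : ℝ) * I) / (Real.cos (ψ - φ) : ℂ)
      = ((-Real.tan (ψ - φ) : ℝ) : ℂ) * I := by
  have hcos_sq : Real.cos (ψ - φ) ^ 2 - Real.cos (ψ + φ) ^ 2
      = 4 * Real.sin ψ * Real.cos ψ * Real.sin φ * Real.cos φ := by
    rw [Real.cos_sub, Real.cos_add]; ring
  have him_orthocenter :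
      (1 - v.re ^ 2) * Real.cos (ψ - φ) = v.im * (2 * Real.cos ψ * Real.sin φ) := by
    apply mul_right_cancel₀ hD
    linear_combination (-(v.re * Real.cos (ψ - φ) + Real.cos (ψ + φ))) * hre
      - 2 * Real.cos ψ * Real.sin φ * him + hcos_sq
  apply Complex.ext <;>
    simp only [sub_re, sub_im, add_re, add_im, mul_re, mul_im, ofReal_re, ofReal_im, I_re, I_im,
      div_ofReal_re, div_ofReal_im, exp_ofReal_mul_I_re, exp_ofReal_mul_I_im,
      orthocenterPM1, Real.tan_eq_sin_div_cos, mul_zero, mul_one, sub_zero, add_zero, zero_add] <;>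
    field_simp
  · linear_combination hre
  · rw [Real.sin_sub, Real.sin_add]
    linear_combination him_orthocenter

end HalfAngles

/-- The orthocenter `p = Re v + i (1 - (Re v)²) / Im v` of the triangle with vertices
`v, 1, -1`, where `v` is the intersection of the line through `x = e^{iα}` and `1` with
the line through `y = e^{iβ}` and `-1`, lies on the circle `S¹(a, r_a)` with
`a = e^{i(β+α)/2} / cos((β-α)/2)` and `r_a = tan((β-α)/2)`. -/
theorem orthocenter_on_orthogonal_circle (α β : ℝ)
    (hα : 0 < α) (hαβ : α < β) (hβ : β < Real.pi)
    (x y : ℂ) (hx : x = Complex.exp (α * Complex.I))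
    (hy : y = Complex.exp (β * Complex.I))
    (a : ℂ) (ra : ℝ)
    (ha : a = Complex.exp (((β + α) / 2 : ℝ) * Complex.I) / ((Real.cos ((β - α) / 2) : ℝ) : ℂ))
    (hra : ra = Real.tan ((β - α) / 2))
    (v : ℂ) (hv1 : v ∈ lineThrough x 1) (hv2 : v ∈ lineThrough y (-1))
    (hvim : v.im ≠ 0)
    (p : ℂ) (hp : p = (v.re : ℂ) + (((1 - v.re ^ 2) / v.im : ℝ) : ℂ) * Complex.I) :
    ‖p - a‖ = ra := by
  subst hx hy hp hra
  have hD : Real.cos (β / 2 - α / 2) ≠ 0 :=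
    (Real.cos_pos_of_mem_Ioo ⟨by linarith, by linarith⟩).ne'
  have h₁ := one_sub_re_mul_cos_half_eq_im_mul_sin_half hv1
  have h₂ := re_add_one_mul_sin_half_eq_im_mul_cos_half hv2
  have hpa := orthocenterPM1_sub_eq_neg_tan_mul_I (re_mul_cos_sub_eq_cos_add h₁ h₂)
    (im_mul_cos_sub_eq_two_mul_sin_mul_cos h₁ h₂) hD hvim
  rw [show β / 2 + α / 2 = (β + α) / 2 by ring, show β / 2 - α / 2 = (β - α) / 2 by ring,
    ← ha] at hpa
  change ‖orthocenterPM1 v - a‖ = _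
  rw [hpa, norm_mul, norm_I, mul_one, norm_real, norm_neg,
    Real.norm_of_nonneg (Real.tan_nonneg_of_nonneg_of_le_pi_div_two (by linarith) (by linarith))]
end

section
/- Let x and y be points of the unit circle with Im x > 0 and Im y > 0. Then 2·ρ_{H²}(x,y) = ρ_{B²}(Re x, Re y), where Re x, Re y ∈ (−1,1) are the orthogonal projections of x and y onto the real axis, regarded as points of the unit disk. -/
open Complex ComplexConjugate

/-! Write `x = a + u i`, `y = b + v i` with `a² + u² = b² + v² = 1`. On the unit circle the
half-plane quantity `cosh ρ_{H²}(x, y)` simplifies to `(1 - ab) / (uv)`, while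
`sinh (ρ_{B²}(a, b) / 2) = |a - b| / (uv)` because `√(1 - a²) = u`. The identity
`(1 - ab)² = (a - b)² + (1 - a²)(1 - b²)` then says `cosh² ρ_{H²} = 1 + sinh² (ρ_{B²} / 2)`,
so `ρ_{H²} = ρ_{B²} / 2`. -/

lemma arcosh_eq_arsinh_of_sq_eq {c s : ℝ} (hc : 0 ≤ c) (hs : 0 ≤ s) (h : c ^ 2 = 1 + s ^ 2) :
    arcosh c = Real.arsinh s := by
  rw [arcosh, Real.arsinh, show c ^ 2 - 1 = s ^ 2 by linarith, ← h, Real.sqrt_sq hs,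
    Real.sqrt_sq hc, add_comm]

namespace Complex

variable {x y : ℂ}

lemma re_sq_add_im_sq_of_norm_eq_one (hx : ‖x‖ = 1) : x.re ^ 2 + x.im ^ 2 = 1 := by
  have h := Complex.sq_norm x
  rw [hx, normSq_apply] at h
  linarith

lemma sqrt_one_sub_norm_re_sq (hx : ‖x‖ = 1) (him : 0 ≤ x.im) :
    √(1 - ‖(x.re : ℂ)‖ ^ 2) = x.im := by
  rw [norm_real, Real.norm_eq_abs, sq_abs,
    ← Real.sqrt_sq him, ← re_sq_add_im_sq_of_norm_eq_one hx, add_sub_cancel_left]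

lemma re_mul_re_le_one (hx : ‖x‖ = 1) (hy : ‖y‖ = 1) : x.re * y.re ≤ 1 := by
  nlinarith [sq_nonneg (x.re - y.re), sq_nonneg x.im, sq_nonneg y.im,
    re_sq_add_im_sq_of_norm_eq_one hx, re_sq_add_im_sq_of_norm_eq_one hy]

lemma one_add_norm_sub_sq_div_of_norm_eq_one (hx : ‖x‖ = 1) (hy : ‖y‖ = 1)
    (hx0 : x.im ≠ 0) (hy0 : y.im ≠ 0) :
    1 + ‖x - y‖ ^ 2 / (2 * x.im * y.im) = (1 - x.re * y.re) / (x.im * y.im) := by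
  have hx' := re_sq_add_im_sq_of_norm_eq_one hx
  have hy' := re_sq_add_im_sq_of_norm_eq_one hy
  rw [Complex.sq_norm, normSq_apply, sub_re, sub_im, mul_assoc]
  field_simp
  linear_combination hx' + hy'

lemma sq_one_sub_re_mul_re_div (hx : ‖x‖ = 1) (hy : ‖y‖ = 1)
    (hx0 : x.im ≠ 0) (hy0 : y.im ≠ 0) :
    ((1 - x.re * y.re) / (x.im * y.im)) ^ 2 = 1 + (|x.re - y.re| / (x.im * y.im)) ^ 2 := by
  have hx' := re_sq_add_im_sq_of_norm_eq_one hx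
  have hy' := re_sq_add_im_sq_of_norm_eq_one hy
  rw [div_pow, div_pow, sq_abs]
  field_simp
  linear_combination -y.im ^ 2 * hx' - (1 - x.re ^ 2) * hy'

end Complex

/-- Projection property: for `x, y` on the unit circle with positive imaginary parts,
`2 ρ_{H²}(x, y) = ρ_{B²}(Re x, Re y)`. -/
theorem projection_property (x y : ℂ)
    (hx1 : ‖x‖ = 1) (hx2 : 0 < x.im)
    (hy1 : ‖y‖ = 1) (hy2 : 0 < y.im) :
    2 * rhoH x y = rhoB ((x.re : ℝ) : ℂ) ((y.re : ℝ) : ℂ) := by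
  rw [rhoH, rhoB, one_add_norm_sub_sq_div_of_norm_eq_one hx1 hy1 hx2.ne' hy2.ne',
    sqrt_one_sub_norm_re_sq hx1 hx2.le, sqrt_one_sub_norm_re_sq hy1 hy2.le, ← ofReal_sub,
    norm_real, Real.norm_eq_abs,
    arcosh_eq_arsinh_of_sq_eq _ _ (sq_one_sub_re_mul_re_div hx1 hy1 hx2.ne' hy2.ne')]
  · have := re_mul_re_le_one hx1 hy1
    exact div_nonneg (by linarith) (by positivity)
  · positivity
end

section
/- Let t ∈ (0,1). The Euclidean line through the points i and t meets the unit circle in a second point N = (2t + i(t²−1))/(1+t²), and the foot of the perpendicular from N to the real axis is the point 2t/(1+t²) ∈ (0,1), which satisfies ρ_{B²}(0, 2t/(1+t²)) = 2·ρ_{B²}(0, t). Consequently, iterating this construction from X₁ = t produces points X_k on the same radius with ρ_{B²}(0, X_k) = k·ρ_{B²}(0, X₁). -/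
open Complex ComplexConjugate

/-! Since `ρ(0, x) = 2 artanh x` on `[0, 1)`, the point of the radius at distance `s · ρ(0, t)` from
the origin is `tanh (s · artanh t)`; the doubling step is the double-angle formula
`tanh (2a) = 2 tanh a / (1 + tanh² a)`, which produces `2t / (1 + t²)`, the real part of `N`. -/

open Real in
lemma rhoB_zero_eq_two_mul_artanh {z : ℂ} (hz : ‖z‖ < 1) : rhoB 0 z = 2 * artanh ‖z‖ := by
  have hmem : ‖z‖ ∈ Set.Ioo (-1 : ℝ) 1 := ⟨by linarith [norm_nonneg z], hz⟩
  simp only [rhoB, zero_sub, norm_neg, norm_zero, ne_eq, OfNat.ofNat_ne_zero,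
    not_false_eq_true, zero_pow, sub_zero, Real.sqrt_one, one_mul]
  rw [← sinh_artanh hmem, arsinh_sinh]

lemma rhoB_zero_ofReal {x : ℝ} (h0 : 0 ≤ x) (h1 : x < 1) : rhoB 0 x = 2 * Real.artanh x := by
  have hx : ‖(x : ℂ)‖ = x := by rw [Complex.norm_real, Real.norm_of_nonneg h0]
  rw [rhoB_zero_eq_two_mul_artanh (by rwa [hx]), hx]

namespace Real

lemma tanh_nonneg {x : ℝ} (hx : 0 ≤ x) : 0 ≤ tanh x := by
  rw [tanh_eq_sinh_div_cosh]
  exact div_nonneg (sinh_nonneg_iff.2 hx) (cosh_pos x).le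

lemma tanh_two_mul (x : ℝ) : tanh (2 * x) = 2 * tanh x / (1 + tanh x ^ 2) := by
  have hc := (cosh_pos x).ne'
  rw [tanh_eq_sinh_div_cosh, tanh_eq_sinh_div_cosh, sinh_two_mul, cosh_two_mul]
  field_simp

lemma tanh_two_mul_artanh {t : ℝ} (ht : t ∈ Set.Ioo (-1) 1) :
    tanh (2 * artanh t) = 2 * t / (1 + t ^ 2) := by
  rw [tanh_two_mul, tanh_artanh ht]

end Real

open Real in
lemma rhoB_zero_tanh_mul_artanh {s t : ℝ} (hs : 0 ≤ s) (ht0 : 0 ≤ t) (ht1 : t < 1) :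
    rhoB 0 (tanh (s * artanh t) : ℝ) = s * rhoB 0 t := by
  rw [rhoB_zero_ofReal (tanh_nonneg (mul_nonneg hs (artanh_nonneg ht0))) (tanh_lt_one _),
    artanh_tanh, rhoB_zero_ofReal ht0 ht1]
  ring

noncomputable def secondIntersection (t : ℝ) : ℂ :=
  (2 * (t : ℂ) + ((t : ℂ) ^ 2 - 1) * Complex.I) / (1 + (t : ℂ) ^ 2)

lemma secondIntersection_eq_re_add_im_mul_I (t : ℝ) :
    secondIntersection t =
      ((2 * t / (1 + t ^ 2) : ℝ) : ℂ) + (((t ^ 2 - 1) / (1 + t ^ 2) : ℝ) : ℂ) * Complex.I := by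
  have hden : (1 + (t : ℂ) ^ 2) ≠ 0 := by exact_mod_cast (by positivity : (1 + t ^ 2 : ℝ) ≠ 0)
  rw [secondIntersection]
  push_cast
  field_simp

lemma re_secondIntersection (t : ℝ) : (secondIntersection t).re = 2 * t / (1 + t ^ 2) := by
  rw [secondIntersection_eq_re_add_im_mul_I, Complex.add_re, Complex.ofReal_re,
    Complex.re_ofReal_mul, Complex.I_re, mul_zero, add_zero]

lemma norm_secondIntersection (t : ℝ) : ‖secondIntersection t‖ = 1 := by
  have hden : (1 + t ^ 2 : ℝ) ≠ 0 := by positivity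
  rw [secondIntersection_eq_re_add_im_mul_I, Complex.norm_add_mul_I, Real.sqrt_eq_one]
  field_simp
  ring

lemma secondIntersection_mem_lineThrough (t : ℝ) :
    secondIntersection t ∈ lineThrough Complex.I t := by
  have hden : (1 + (t : ℂ) ^ 2) ≠ 0 := by exact_mod_cast (by positivity : (1 + t ^ 2 : ℝ) ≠ 0)
  refine ⟨2 / (1 + t ^ 2), ?_⟩
  rw [secondIntersection, Complex.real_smul]
  push_cast
  field_simp
  ring

lemma secondIntersection_ne_I {t : ℝ} (ht : t ≠ 0) : secondIntersection t ≠ Complex.I := by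
  have hre : (secondIntersection t).re ≠ 0 := by rw [re_secondIntersection]; positivity
  exact fun h => hre (by rw [h, Complex.I_re])

/-- For `t ∈ (0,1)`, the line through `i` and `t` meets the unit circle in the second
point `N = (2t + i(t²-1))/(1+t²)`; the foot of the perpendicular from `N` to the real
axis is `2t/(1+t²) ∈ (0,1)` and satisfies `ρ_{B²}(0, 2t/(1+t²)) = 2 ρ_{B²}(0, t)`.
Consequently, iterating the construction from `X₁ = t` produces points `X_k` on the same
radius with `ρ_{B²}(0, X_k) = k · ρ_{B²}(0, X₁)`. -/
theorem distance_doubling_construction (t : ℝ) (ht0 : 0 < t) (ht1 : t < 1)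
    (N : ℂ)
    (hN : N = (2 * (t : ℂ) + ((t : ℂ) ^ 2 - 1) * Complex.I) / (1 + (t : ℂ) ^ 2)) :
    N ∈ lineThrough Complex.I (t : ℂ) ∧ ‖N‖ = 1 ∧ N ≠ Complex.I ∧
    N.re = 2 * t / (1 + t ^ 2) ∧
    (0 < 2 * t / (1 + t ^ 2) ∧ 2 * t / (1 + t ^ 2) < 1) ∧
    rhoB 0 ((2 * t / (1 + t ^ 2) : ℝ) : ℂ) = 2 * rhoB 0 ((t : ℝ) : ℂ) ∧
    (∃ X : ℕ → ℝ, X 1 = t ∧ (∀ k, 0 ≤ X k ∧ X k < 1) ∧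
      ∀ k, rhoB 0 ((X k : ℝ) : ℂ) = (k : ℝ) * rhoB 0 ((t : ℝ) : ℂ)) := by
  have htI : t ∈ Set.Ioo (-1 : ℝ) 1 := ⟨by linarith, ht1⟩
  have hdouble := Real.tanh_two_mul_artanh htI
  rw [show N = secondIntersection t from hN]
  refine ⟨secondIntersection_mem_lineThrough t, norm_secondIntersection t,
    secondIntersection_ne_I ht0.ne', re_secondIntersection t,
    ⟨by positivity, hdouble ▸ Real.tanh_lt_one _⟩, ?_, ?_⟩
  · rw [← hdouble]
    exact rhoB_zero_tanh_mul_artanh zero_le_two ht0.le ht1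
  · refine ⟨fun k => Real.tanh (k * Real.artanh t), ?_, fun k => ⟨?_, Real.tanh_lt_one _⟩,
      fun k => rhoB_zero_tanh_mul_artanh k.cast_nonneg ht0.le ht1⟩
    · simp [Real.tanh_artanh htI]
    · exact Real.tanh_nonneg (mul_nonneg k.cast_nonneg (Real.artanh_nonneg ht0.le))
end

section
/- Let x, y ∈ B²∖{0} with 0, x, y noncollinear and |x| ≠ |y|, and let x* = x/|x|², y* = y/|y|². Then the line through x and y* and the line through y and x* meet in the unique point u = (y(1−|x|²) + x(1−|y|²))/(1 − |x|²|y|²). -/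
open Complex ComplexConjugate

/-! In the real basis `x, y` of `ℂ` (available because `0, x, y` are not collinear) the
directions `y* - x` and `x* - y` of the two lines have coordinates `(-1, |y|⁻²)` and
`(|x|⁻², -1)`, with determinant `1 - (|x||y|)⁻² ≠ 0`; so the lines are not parallel and
meet at most once. The point `u` lies on the first line at parameter
`|y|²(1 - |x|²)/(1 - |x|²|y|²)`, and on the second by the symmetry `x ↔ y`. -/

lemma linearIndependent_pair_of_not_collinear {k V : Type*} [Field k] [AddCommGroup V]
    [Module k V] {x y : V} (h : ¬Collinear k ({0, x, y} : Set V)) :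
    LinearIndependent k ![x, y] := by
  rw [LinearIndependent.pair_iff' (ne₁₂_of_not_collinear h).symm]
  rintro a rfl
  have hax : a • x ∈ line[k, (0 : V), x] := by
    simpa using smul_vsub_vadd_mem_affineSpan_pair a (0 : V) x
  apply h
  rw [Set.pair_comm, Set.insert_comm]
  exact collinear_insert_of_mem_affineSpan_pair hax

lemma eq_of_mem_lineThrough_of_linearIndependent {p q p' q' z w : ℂ}
    (h : LinearIndependent ℝ ![q - p, q' - p'])
    (hz : z ∈ lineThrough p q) (hz' : z ∈ lineThrough p' q')
    (hw : w ∈ lineThrough p q) (hw' : w ∈ lineThrough p' q') : z = w := by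
  obtain ⟨s, hs⟩ := hz
  obtain ⟨s', hs'⟩ := hz'
  obtain ⟨t, ht⟩ := hw
  obtain ⟨t', ht'⟩ := hw'
  have hcomb : (s - t) • (q - p) + (t' - s') • (q' - p') = 0 := by
    linear_combination (norm := module) hs' - hs - ht' + ht
  obtain ⟨hst, -⟩ := LinearIndependent.pair_iff.mp h _ _ hcomb
  rw [hs, ht, sub_eq_zero.mp hst]

lemma linearIndependent_div_sub_pair {x y : ℂ} (h : LinearIndependent ℝ ![x, y]) {a b : ℝ}
    (hab : a * b ≠ 1) : LinearIndependent ℝ ![y / (b : ℂ) - x, x / (a : ℂ) - y] := by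
  have hdet : (-1 : ℝ) * (-1) ≠ b⁻¹ * a⁻¹ := by
    rwa [neg_one_mul, neg_neg, ← mul_inv, mul_comm b, ne_comm, Ne, inv_eq_one]
  have hvec : ![y / (b : ℂ) - x, x / (a : ℂ) - y] =
      ![(-1 : ℝ) • x + b⁻¹ • y, a⁻¹ • x + (-1 : ℝ) • y] := by
    simp only [Complex.real_smul, div_eq_inv_mul]
    push_cast
    ring_nf
  rw [hvec]
  exact (LinearIndependent.pair_add_smul_add_smul_iff _ _ _ _).mpr ⟨h, hdet⟩

lemma mem_lineThrough_div {a b : ℝ} (x y : ℂ) (hb : b ≠ 0) (hab : a * b ≠ 1) :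
    (y * (1 - (a : ℂ)) + x * (1 - (b : ℂ))) / ((1 - a * b : ℝ) : ℂ) ∈
      lineThrough x (y / (b : ℂ)) := by
  refine ⟨b * (1 - a) / (1 - a * b), ?_⟩
  have hab' : (1 : ℂ) - a * b ≠ 0 := by exact_mod_cast sub_ne_zero.mpr hab.symm
  have hb' : (b : ℂ) ≠ 0 := by exact_mod_cast hb
  rw [Complex.real_smul]
  push_cast
  field_simp
  ring

theorem intersection_point_u_general (x y : ℂ)
    (hx1 : ‖x‖ < 1) (hy1 : ‖y‖ < 1)
    (hncol : ¬ Collinear ℝ ({0, x, y} : Set ℂ))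
    (xs ys : ℂ)
    (hxs : xs = x / ((‖x‖ : ℂ) ^ 2)) (hys : ys = y / ((‖y‖ : ℂ) ^ 2))
    (u : ℂ)
    (hu : u = (y * (1 - (‖x‖ : ℂ) ^ 2) + x * (1 - (‖y‖ : ℂ) ^ 2))
        / (((1 - ‖x‖ ^ 2 * ‖y‖ ^ 2 : ℝ)) : ℂ)) :
    u ∈ lineThrough x ys ∧ u ∈ lineThrough y xs ∧
    ∀ p ∈ lineThrough x ys, p ∈ lineThrough y xs → p = u := by
  have hind := linearIndependent_pair_of_not_collinear hncol
  have hx0 : ‖x‖ ^ 2 ≠ 0 := by simpa using hind.ne_zero 0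
  have hy0 : ‖y‖ ^ 2 ≠ 0 := by simpa using hind.ne_zero 1
  have hprod : ‖x‖ ^ 2 * ‖y‖ ^ 2 ≠ 1 := by
    rw [← mul_pow]
    exact (pow_lt_one₀ (by positivity)
      (mul_lt_one_of_nonneg_of_lt_one_left (norm_nonneg x) hx1 hy1.le) two_ne_zero).ne
  have hu₁ : u ∈ lineThrough x ys := by
    have := mem_lineThrough_div x y hy0 hprod
    rw [hu, hys]
    exact_mod_cast this
  have hu₂ : u ∈ lineThrough y xs := by
    have := mem_lineThrough_div y x hx0 (by rwa [mul_comm])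
    rw [hu, hxs, add_comm, mul_comm (‖x‖ ^ 2)]
    exact_mod_cast this
  have hdir : LinearIndependent ℝ ![ys - x, xs - y] := by
    rw [hxs, hys]
    exact_mod_cast linearIndependent_div_sub_pair hind hprod
  exact ⟨hu₁, hu₂, fun p hp₁ hp₂ ↦
    eq_of_mem_lineThrough_of_linearIndependent hdir hp₁ hp₂ hu₁ hu₂⟩

/-- For `x, y ∈ B² \ {0}` with `0, x, y` noncollinear and `|x| ≠ |y|`, the line through
`x, y*` and the line through `y, x*` meet in the unique point
`u = (y(1-|x|²) + x(1-|y|²))/(1 - |x|²|y|²)`. -/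
theorem intersection_point_u (x y : ℂ)
    (hx1 : ‖x‖ < 1) (hy1 : ‖y‖ < 1) (hx0 : x ≠ 0) (hy0 : y ≠ 0)
    (hncol : ¬ Collinear ℝ ({0, x, y} : Set ℂ))
    (hxy : ‖x‖ ≠ ‖y‖)
    (xs ys : ℂ)
    (hxs : xs = x / ((‖x‖ : ℂ) ^ 2)) (hys : ys = y / ((‖y‖ : ℂ) ^ 2))
    (u : ℂ)
    (hu : u = (y * (1 - (‖x‖ : ℂ) ^ 2) + x * (1 - (‖y‖ : ℂ) ^ 2))
        / (((1 - ‖x‖ ^ 2 * ‖y‖ ^ 2 : ℝ)) : ℂ)) :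
    u ∈ lineThrough x ys ∧ u ∈ lineThrough y xs ∧
    ∀ p ∈ lineThrough x ys, p ∈ lineThrough y xs → p = u :=
  intersection_point_u_general x y hx1 hy1 hncol xs ys hxs hys u hu
end

section
/- Let x, y ∈ B²∖{0} with 0, x, y noncollinear and |x| ≠ |y|, let x* = x/|x|², y* = y/|y|², and let S¹(a,r_a) be the circle through x, y, x*, y* orthogonal to the unit circle. Assume the arc of S¹(a,r_a) from x* to y* through x and y is a semicircle, i.e., |x* − y*| = 2r_a. Let S¹(c,r_c) be the circle through 0, x, y, let z be the intersection point of the line through 0 and c with S¹(a,r_a) lying in B², and let z' be the other intersection point (lying outside the closed unit disk). Then: (i) z is the hyperbolic midpoint of x and y; (ii) S¹(c,r_c) is orthogonal to S¹(a,r_a); (iii) the absolute ratios satisfy |z, x, x*, z'| = |z, y, y*, z'|. -/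
/-!
Write `w* = w / |w|²`. Because `|a|² = 1 + r_a²`, the circle `S¹(a, r_a)` is the locus
`|w|² + 1 = 2⟨w, a⟩`, which is invariant under `w ↦ w*`; so `x*, y*` lie on it, and the two points
`z, z'` in which a line through `0` meets it are inverse to each other, `z' = z*`. The semicircle
hypothesis makes `a` the midpoint of `x*` and `y*`, so `⟨x*, y*⟩ = |a|² - r_a² = 1`, i.e.
`⟨x, y⟩ = |x|² |y|²`. The circle through `0, x, y` gives `2⟨c, x⟩ = |x|²` and `2⟨c, y⟩ = |y|²`,
hence `2⟨c, a⟩ = 1`, which is the orthogonality (ii); and `z = t c` satisfies `2⟨z, x⟩ = t |x|²`,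
`2⟨z, y⟩ = t |y|²`, `|z|² = t - 1`. Then `sinh²(ρ(x, z)/2) = sinh²(ρ(y, z)/2) = s := (t - 1)/(2 - t)`,
while the vanishing Gram determinant of `x, y, z` in `ℝ²` gives `sinh²(ρ(x, y)/2) = 4 s (1 + s)`,
which by the duplication formula for `sinh` is (i). Finally `|z, w, w*, z*| = coth²(ρ(w, z)/2)` for
all `w ≠ z` in `B² ∖ {0}`, so (iii) follows from (i).
-/

open Complex ComplexConjugate

open EuclideanGeometry
open scoped RealInnerProductSpace

section InnerProductSpace

variable {E : Type*} [NormedAddCommGroup E] [InnerProductSpace ℝ E]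

theorem inversion_zero_one (x : E) : inversion (0 : E) 1 x = (‖x‖ ^ 2)⁻¹ • x := by
  simp [inversion]

theorem inner_inversion_zero_one_left (x w : E) :
    ⟪inversion 0 1 x, w⟫ = ⟪x, w⟫ / ‖x‖ ^ 2 := by
  rw [inversion_zero_one, real_inner_smul_left, inv_mul_eq_div]

theorem sq_norm_inversion_zero_one (x : E) : ‖inversion (0 : E) 1 x‖ ^ 2 = (‖x‖ ^ 2)⁻¹ := by
  rw [← dist_zero_right, dist_inversion_center, dist_zero_right, one_pow, div_pow, one_pow,
    one_div]

theorem two_inner_eq_sq_norm_of_norm_sub_eq_norm {x c : E} (h : ‖x - c‖ = ‖c‖) :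
    2 * ⟪c, x⟫ = ‖x‖ ^ 2 := by
  have := norm_sub_sq_real x c
  rw [h, real_inner_comm] at this
  linarith

theorem norm_sub_eq_iff_sq_norm_add_one_eq {w a : E} {r : ℝ} (hr : 0 ≤ r)
    (ha : ‖a‖ ^ 2 = 1 + r ^ 2) : ‖w - a‖ = r ↔ ‖w‖ ^ 2 + 1 = 2 * ⟪w, a⟫ := by
  rw [← sq_eq_sq₀ (norm_nonneg _) hr, norm_sub_sq_real, ha]
  constructor <;> intro h <;> linarith

theorem sq_norm_inversion_add_one_eq {w a : E} (hw : w ≠ 0) (h : ‖w‖ ^ 2 + 1 = 2 * ⟪w, a⟫) :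
    ‖inversion 0 1 w‖ ^ 2 + 1 = 2 * ⟪inversion 0 1 w, a⟫ := by
  have : ‖w‖ ≠ 0 := norm_ne_zero_iff.2 hw
  rw [sq_norm_inversion_zero_one, inner_inversion_zero_one_left]
  field_simp
  linarith

theorem add_eq_two_smul_of_norm_sub_eq {p q a : E} {r : ℝ} (hp : ‖p - a‖ = r) (hq : ‖q - a‖ = r)
    (hpq : ‖p - q‖ = 2 * r) : p + q = (2 : ℝ) • a := by
  have h := parallelogram_law_with_norm ℝ (p - a) (q - a)
  rw [hp, hq, sub_sub_sub_cancel_right, hpq] at h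
  have : ‖p + q - (2 : ℝ) • a‖ = 0 := by
    rw [two_smul, show p + q - (a + a) = p - a + (q - a) by abel]
    nlinarith [norm_nonneg (p - a + (q - a))]
  rwa [norm_eq_zero, sub_eq_zero] at this

theorem inner_eq_of_add_eq_two_smul {p q a : E} {r : ℝ} (hp : ‖p - a‖ = r)
    (hpq : p + q = (2 : ℝ) • a) : ⟪p, q⟫ = ‖a‖ ^ 2 - r ^ 2 := by
  obtain rfl : q = (2 : ℝ) • a - p := by rw [← hpq]; abel
  rw [← hp, norm_sub_sq_real, inner_sub_right, real_inner_smul_right, real_inner_comm,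
    real_inner_self_eq_norm_sq]
  ring

theorem add_inversion_eq_two_smul_and_inner_eq {x y a : E} {r : ℝ} (hx : x ≠ 0) (hy : y ≠ 0)
    (hr : 0 ≤ r) (ha : ‖a‖ ^ 2 = 1 + r ^ 2) (hxa : ‖x‖ ^ 2 + 1 = 2 * ⟪x, a⟫)
    (hya : ‖y‖ ^ 2 + 1 = 2 * ⟪y, a⟫) (hxy : ‖inversion 0 1 x - inversion 0 1 y‖ = 2 * r) :
    inversion 0 1 x + inversion 0 1 y = (2 : ℝ) • a ∧ ⟪x, y⟫ = ‖x‖ ^ 2 * ‖y‖ ^ 2 := by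
  have hxs := (norm_sub_eq_iff_sq_norm_add_one_eq hr ha).2 (sq_norm_inversion_add_one_eq hx hxa)
  have hys := (norm_sub_eq_iff_sq_norm_add_one_eq hr ha).2 (sq_norm_inversion_add_one_eq hy hya)
  have hmid := add_eq_two_smul_of_norm_sub_eq hxs hys hxy
  refine ⟨hmid, ?_⟩
  have h := inner_eq_of_add_eq_two_smul hxs hmid
  rw [ha, add_sub_cancel_right, inner_inversion_zero_one_left, real_inner_comm,
    inner_inversion_zero_one_left, div_div, div_eq_one_iff_eq (by positivity)] at h
  rw [real_inner_comm, h, mul_comm]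

theorem eq_inversion_of_eq_smul {u v a : E} {s : ℝ} (hu : ‖u‖ ^ 2 + 1 = 2 * ⟪u, a⟫)
    (hv : ‖v‖ ^ 2 + 1 = 2 * ⟪v, a⟫) (hvu : v = s • u) (hne : v ≠ u) : v = inversion 0 1 u := by
  subst hvu
  rw [norm_smul, mul_pow, Real.norm_eq_abs, sq_abs, real_inner_smul_left] at hv
  have hs : s ≠ 1 := by rintro rfl; exact hne (one_smul ℝ u)
  have hsu : s * ‖u‖ ^ 2 = 1 := by
    have : (s - 1) * (s * ‖u‖ ^ 2 - 1) = 0 := by linear_combination hv - s * hu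
    rcases mul_eq_zero.1 this with h | h
    · exact absurd (sub_eq_zero.1 h) hs
    · linarith
  rw [inversion_zero_one, eq_inv_of_mul_eq_one_left hsu]

theorem two_inner_eq_one_of_add_inversion_eq {x y a c : E} (hx : x ≠ 0) (hy : y ≠ 0)
    (hmid : inversion 0 1 x + inversion 0 1 y = (2 : ℝ) • a) (hcx : 2 * ⟪c, x⟫ = ‖x‖ ^ 2)
    (hcy : 2 * ⟪c, y⟫ = ‖y‖ ^ 2) : 2 * ⟪c, a⟫ = 1 := by
  have hx' : ‖x‖ ≠ 0 := norm_ne_zero_iff.2 hx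
  have hy' : ‖y‖ ≠ 0 := norm_ne_zero_iff.2 hy
  rw [← real_inner_smul_right, ← hmid, inner_add_right, real_inner_comm,
    inner_inversion_zero_one_left, real_inner_comm (inversion 0 1 y),
    inner_inversion_zero_one_left, real_inner_comm c x, real_inner_comm c y]
  field_simp
  linear_combination (‖y‖ ^ 2 / 2) * hcx + (‖x‖ ^ 2 / 2) * hcy

theorem one_lt_and_sq_norm_smul_eq {c a : E} {t : ℝ} (hca : 2 * ⟪c, a⟫ = 1)
    (h : ‖t • c‖ ^ 2 + 1 = 2 * ⟪t • c, a⟫) : 1 < t ∧ ‖t • c‖ ^ 2 = t - 1 := by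
  rw [real_inner_smul_left, mul_left_comm, hca, mul_one] at h
  refine ⟨?_, by linarith⟩
  by_contra! ht
  have hc : t • c = 0 := by
    rw [← norm_eq_zero, ← sq_eq_zero_iff]
    linarith [sq_nonneg ‖t • c‖]
  rw [hc, norm_zero] at h
  rw [smul_eq_zero] at hc
  rcases hc with rfl | rfl
  · norm_num at h
  · simp at hca

theorem sq_norm_sub_eq_of_two_inner {x z : E} {t : ℝ} (hzx : 2 * ⟪z, x⟫ = t * ‖x‖ ^ 2)
    (hz : ‖z‖ ^ 2 = t - 1) : ‖x - z‖ ^ 2 = (t - 1) * (1 - ‖x‖ ^ 2) := by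
  rw [norm_sub_sq_real, real_inner_comm, hz]
  linear_combination -hzx

theorem sq_norm_mul_norm_sub_inversion {x : E} (hx : x ≠ 0) (z : E) :
    (‖x‖ * ‖z - inversion 0 1 x‖) ^ 2 = ‖x - z‖ ^ 2 + (1 - ‖x‖ ^ 2) * (1 - ‖z‖ ^ 2) := by
  have : ‖x‖ ≠ 0 := norm_ne_zero_iff.2 hx
  rw [inversion_zero_one, mul_pow, norm_sub_sq_real, norm_sub_sq_real, norm_smul,
    real_inner_smul_right, mul_pow, Real.norm_eq_abs, sq_abs, real_inner_comm]
  field_simp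
  ring

theorem norm_sub_inversion_mul_div_eq {x z : E} (hx : x ≠ 0) (hz : z ≠ 0) (hxz : x ≠ z) :
    ‖z - inversion 0 1 x‖ * ‖x - inversion 0 1 z‖
        / (‖z - x‖ * ‖inversion 0 1 x - inversion 0 1 z‖)
      = 1 + (1 - ‖x‖ ^ 2) * (1 - ‖z‖ ^ 2) / ‖x - z‖ ^ 2 := by
  have hswap := dist_inversion_mul_dist_center_eq (R := 1) hx hz
  have hinv := dist_inversion_inversion hx hz 1
  simp only [dist_eq_norm, sub_zero] at hswap hinv
  have hx' : ‖x‖ ≠ 0 := norm_ne_zero_iff.2 hx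
  have hz' : ‖z‖ ≠ 0 := norm_ne_zero_iff.2 hz
  have hxz' : ‖x - z‖ ≠ 0 := norm_ne_zero_iff.2 (sub_ne_zero.2 hxz)
  have hsq := sq_norm_mul_norm_sub_inversion hx z
  rw [norm_sub_rev z] at hsq
  rw [hinv, norm_sub_rev z x, norm_sub_rev z, ← mul_div_cancel_right₀ ‖x - inversion 0 1 z‖ hz',
    ← hswap]
  field_simp
  linear_combination hsq

end InnerProductSpace

theorem Real.sinh_sq_two_mul (u : ℝ) :
    Real.sinh (2 * u) ^ 2 = 4 * Real.sinh u ^ 2 * (1 + Real.sinh u ^ 2) := by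
  rw [Real.sinh_two_mul, mul_pow, mul_pow, Real.cosh_sq]
  ring

theorem Real.eq_of_sinh_sq_eq {u v : ℝ} (hu : 0 ≤ u) (hv : 0 ≤ v)
    (h : Real.sinh u ^ 2 = Real.sinh v ^ 2) : u = v :=
  Real.sinh_injective <| (sq_eq_sq₀ (Real.sinh_nonneg_iff.2 hu) (Real.sinh_nonneg_iff.2 hv)).1 h

theorem Complex.div_ofReal_norm_sq_eq_inversion (x : ℂ) : x / (‖x‖ : ℂ) ^ 2 = inversion 0 1 x := by
  rw [inversion_zero_one, Complex.real_smul, div_eq_inv_mul]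
  push_cast
  rfl

theorem Complex.gram_det_eq_zero (u v w : ℂ) :
    ‖u‖ ^ 2 * ‖v‖ ^ 2 * ‖w‖ ^ 2 + 2 * ⟪u, v⟫ * ⟪v, w⟫ * ⟪w, u⟫
      = ‖u‖ ^ 2 * ⟪v, w⟫ ^ 2 + ‖v‖ ^ 2 * ⟪w, u⟫ ^ 2 + ‖w‖ ^ 2 * ⟪u, v⟫ ^ 2 := by
  simp only [Complex.inner, Complex.sq_norm, Complex.normSq_apply, Complex.mul_re,
    Complex.conj_re, Complex.conj_im]
  ring

theorem Complex.im_mul_re_sub_re_mul_im_ne_zero_of_not_collinear {x y : ℂ} (hx : x ≠ 0)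
    (h : ¬ Collinear ℝ ({0, x, y} : Set ℂ)) : x.im * y.re - x.re * y.im ≠ 0 := by
  contrapose! h
  have hX : x.re ^ 2 + x.im ^ 2 ≠ 0 := by
    rw [sq, sq, ← Complex.normSq_apply]; exact (Complex.normSq_pos.2 hx).ne'
  have hy : y = (⟪x, y⟫ / ‖x‖ ^ 2) • x := by
    simp only [Complex.ext_iff, Complex.real_smul, Complex.mul_re, Complex.mul_im,
      Complex.ofReal_re, Complex.ofReal_im, Complex.inner, Complex.sq_norm, Complex.normSq_apply,
      Complex.conj_re, Complex.conj_im]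
    constructor <;> field_simp
    · linear_combination x.im * h
    · linear_combination -x.re * h
  obtain ⟨r, rfl⟩ : ∃ r : ℝ, y = r • x := ⟨_, hy⟩
  rw [Set.pair_comm, Set.insert_comm]
  refine collinear_insert_of_mem_affineSpan_pair ?_
  simpa using smul_vsub_vadd_mem_affineSpan_pair r (0 : ℂ) x

noncomputable def geodesicCenter (x y : ℂ) : ℂ :=
  Complex.I * (y * (1 + (‖x‖ : ℂ) ^ 2) - x * (1 + (‖y‖ : ℂ) ^ 2))
    / ((2 * (x.im * y.re - x.re * y.im) : ℝ) : ℂ)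

noncomputable def geodesicRadius (x y : ℂ) : ℝ :=
  ‖x - y‖ * ‖x * (‖y‖ : ℂ) ^ 2 - y‖ / (2 * ‖y‖ * |x.re * y.im - x.im * y.re|)

theorem geodesicCenter_re_im (x y : ℂ) :
    (geodesicCenter x y).re
      = (x.im * (1 + ‖y‖ ^ 2) - y.im * (1 + ‖x‖ ^ 2)) / (2 * (x.im * y.re - x.re * y.im)) ∧
    (geodesicCenter x y).im
      = (y.re * (1 + ‖x‖ ^ 2) - x.re * (1 + ‖y‖ ^ 2)) / (2 * (x.im * y.re - x.re * y.im)) := by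
  rw [geodesicCenter, Complex.div_ofReal_re, Complex.div_ofReal_im]
  constructor <;> congr 1 <;> simp [← Complex.ofReal_pow]

theorem two_inner_geodesicCenter {x y : ℂ} (hd : x.im * y.re - x.re * y.im ≠ 0) :
    ‖x‖ ^ 2 + 1 = 2 * ⟪x, geodesicCenter x y⟫ ∧ ‖y‖ ^ 2 + 1 = 2 * ⟪y, geodesicCenter x y⟫ := by
  obtain ⟨hre, him⟩ := geodesicCenter_re_im x y
  simp only [Complex.inner, Complex.mul_re, Complex.conj_re, Complex.conj_im, hre, him]
  constructor <;>
  · rw [div_mul_eq_mul_div, div_mul_eq_mul_div, ← sub_div, mul_div_assoc',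
      eq_div_iff (mul_ne_zero two_ne_zero hd)]
    ring

theorem sq_norm_geodesicCenter {x y : ℂ} (hd : x.im * y.re - x.re * y.im ≠ 0) :
    ‖geodesicCenter x y‖ ^ 2 = 1 + geodesicRadius x y ^ 2 := by
  have hy : ‖y‖ ≠ 0 := by rintro h; simp [norm_eq_zero.1 h] at hd
  have hd' : x.re * y.im - x.im * y.re ≠ 0 := by contrapose! hd; linarith
  rw [geodesicRadius, geodesicCenter, norm_div, Complex.norm_real, norm_mul, Complex.norm_I,
    one_mul, Real.norm_eq_abs, div_pow, div_pow, mul_pow, mul_pow, mul_pow, sq_abs, sq_abs]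
  field_simp
  rw [← Complex.ofReal_pow, ← Complex.ofReal_pow]
  simp only [Complex.sq_norm, Complex.normSq_apply, Complex.sub_re, Complex.sub_im,
    Complex.mul_re, Complex.mul_im, Complex.add_re, Complex.add_im, Complex.ofReal_re,
    Complex.ofReal_im, Complex.one_re, Complex.one_im]
  ring

theorem rhoB_comm (x y : ℂ) : rhoB x y = rhoB y x := by
  rw [rhoB, rhoB, norm_sub_rev, mul_comm √(1 - ‖x‖ ^ 2)]

theorem rhoB_nonneg (x y : ℂ) : 0 ≤ rhoB x y :=
  mul_nonneg zero_le_two (Real.arsinh_nonneg_iff.2 (by positivity))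

theorem sinh_sq_half_rhoB {x y : ℂ} (hx : ‖x‖ < 1) (hy : ‖y‖ < 1) :
    Real.sinh (rhoB x y / 2) ^ 2 = ‖x - y‖ ^ 2 / ((1 - ‖x‖ ^ 2) * (1 - ‖y‖ ^ 2)) := by
  have hx' : 0 ≤ 1 - ‖x‖ ^ 2 := by nlinarith [norm_nonneg x]
  have hy' : 0 ≤ 1 - ‖y‖ ^ 2 := by nlinarith [norm_nonneg y]
  rw [rhoB, mul_div_cancel_left₀ _ two_ne_zero, Real.sinh_arsinh, div_pow, mul_pow,
    Real.sq_sqrt hx', Real.sq_sqrt hy']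

theorem sinh_sq_half_rhoB_of_two_inner {x z : ℂ} {t : ℝ} (hx : ‖x‖ < 1) (hz : ‖z‖ < 1)
    (hzx : 2 * ⟪z, x⟫ = t * ‖x‖ ^ 2) (hzz : ‖z‖ ^ 2 = t - 1) :
    Real.sinh (rhoB x z / 2) ^ 2 = (t - 1) / (2 - t) := by
  have hx' : 1 - ‖x‖ ^ 2 ≠ 0 := by nlinarith [norm_nonneg x]
  have ht : 2 - t ≠ 0 := by nlinarith [norm_nonneg z]
  rw [sinh_sq_half_rhoB hx hz, sq_norm_sub_eq_of_two_inner hzx hzz, hzz,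
    show (1 : ℝ) - (t - 1) = 2 - t by ring]
  field_simp

theorem sq_mul_sq_norm_sub_eq_of_two_inner {x y z : ℂ} {t : ℝ} (hx0 : x ≠ 0) (hy0 : y ≠ 0)
    (hxy : ⟪x, y⟫ = ‖x‖ ^ 2 * ‖y‖ ^ 2) (hzx : 2 * ⟪z, x⟫ = t * ‖x‖ ^ 2)
    (hzy : 2 * ⟪z, y⟫ = t * ‖y‖ ^ 2) (hzz : ‖z‖ ^ 2 = t - 1) :
    t ^ 2 * ‖x - y‖ ^ 2 = 4 * (t - 1) * (1 - ‖x‖ ^ 2 * ‖y‖ ^ 2) := by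
  have hgram := Complex.gram_det_eq_zero x y z
  rw [real_inner_comm z y, hxy, hzz, show ⟪z, x⟫ = t * ‖x‖ ^ 2 / 2 by linarith,
    show ⟪z, y⟫ = t * ‖y‖ ^ 2 / 2 by linarith] at hgram
  refine mul_left_cancel₀ (by positivity : ‖x‖ ^ 2 * ‖y‖ ^ 2 ≠ 0) ?_
  rw [norm_sub_sq_real, hxy]
  linear_combination -4 * hgram

theorem rhoB_eq_and_eq_half {x y z : ℂ} {t : ℝ} (hx : ‖x‖ < 1) (hy : ‖y‖ < 1) (hz : ‖z‖ < 1)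
    (hx0 : x ≠ 0) (hy0 : y ≠ 0) (hxy : ⟪x, y⟫ = ‖x‖ ^ 2 * ‖y‖ ^ 2)
    (hzx : 2 * ⟪z, x⟫ = t * ‖x‖ ^ 2) (hzy : 2 * ⟪z, y⟫ = t * ‖y‖ ^ 2) (hzz : ‖z‖ ^ 2 = t - 1) :
    rhoB x z = rhoB z y ∧ rhoB z y = rhoB x y / 2 := by
  have hsx := sinh_sq_half_rhoB_of_two_inner hx hz hzx hzz
  have hsy := sinh_sq_half_rhoB_of_two_inner hy hz hzy hzz
  have hsxy : Real.sinh (rhoB x y / 2) ^ 2 = 4 * ((t - 1) / (2 - t)) * (1 + (t - 1) / (2 - t)) := by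
    have hx' : 1 - ‖x‖ ^ 2 ≠ 0 := by nlinarith [norm_nonneg x]
    have hy' : 1 - ‖y‖ ^ 2 ≠ 0 := by nlinarith [norm_nonneg y]
    have ht : 2 - t ≠ 0 := by nlinarith [norm_nonneg z]
    have hrel := sq_mul_sq_norm_sub_eq_of_two_inner hx0 hy0 hxy hzx hzy hzz
    rw [sinh_sq_half_rhoB hx hy]
    rw [norm_sub_sq_real, hxy] at hrel ⊢
    field_simp
    linear_combination hrel
  rw [rhoB_comm z y]
  constructor
  · have := Real.eq_of_sinh_sq_eq (u := rhoB x z / 2) (v := rhoB y z / 2)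
      (by linarith [rhoB_nonneg x z]) (by linarith [rhoB_nonneg y z]) (by rw [hsx, hsy])
    linarith
  · have := Real.eq_of_sinh_sq_eq (u := rhoB x y / 2) (v := 2 * (rhoB y z / 2))
      (by linarith [rhoB_nonneg x y]) (by linarith [rhoB_nonneg y z])
      (by rw [hsxy, Real.sinh_sq_two_mul, hsy])
    linarith

theorem norm_sub_inversion_mul_div_eq_one_add_inv_sinh_sq {x z : ℂ} (hx : ‖x‖ < 1)
    (hz : ‖z‖ < 1) (hx0 : x ≠ 0) (hz0 : z ≠ 0) (hxz : x ≠ z) :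
    ‖z - inversion 0 1 x‖ * ‖x - inversion 0 1 z‖
        / (‖z - x‖ * ‖inversion 0 1 x - inversion 0 1 z‖)
      = 1 + (Real.sinh (rhoB x z / 2) ^ 2)⁻¹ := by
  rw [norm_sub_inversion_mul_div_eq hx0 hz0 hxz, sinh_sq_half_rhoB hx hz, inv_div]

theorem rhoB_midpoint_and_absRatio_eq {x y z : ℂ} {t : ℝ} (hx : ‖x‖ < 1) (hy : ‖y‖ < 1)
    (hz : ‖z‖ < 1) (hx0 : x ≠ 0) (hy0 : y ≠ 0) (hxy : ⟪x, y⟫ = ‖x‖ ^ 2 * ‖y‖ ^ 2)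
    (hzx : 2 * ⟪z, x⟫ = t * ‖x‖ ^ 2) (hzy : 2 * ⟪z, y⟫ = t * ‖y‖ ^ 2) (hzz : ‖z‖ ^ 2 = t - 1)
    (ht : 1 < t) :
    (rhoB x z = rhoB z y ∧ rhoB z y = rhoB x y / 2) ∧
    ‖z - inversion 0 1 x‖ * ‖x - inversion 0 1 z‖
        / (‖z - x‖ * ‖inversion 0 1 x - inversion 0 1 z‖)
      = ‖z - inversion 0 1 y‖ * ‖y - inversion 0 1 z‖
        / (‖z - y‖ * ‖inversion 0 1 y - inversion 0 1 z‖) := by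
  have hz0 : z ≠ 0 := by
    rintro rfl
    rw [norm_zero] at hzz
    linarith
  have hne : ∀ {w : ℂ}, ‖w‖ < 1 → 2 * ⟪z, w⟫ = t * ‖w‖ ^ 2 → w ≠ z := by
    rintro w hw hzw rfl
    have h : 0 < (t - 1) * (1 - ‖w‖ ^ 2) := mul_pos (by linarith) (by nlinarith [norm_nonneg w])
    rw [← sq_norm_sub_eq_of_two_inner hzw hzz, sub_self, norm_zero] at h
    simp at h
  have hρ := rhoB_eq_and_eq_half hx hy hz hx0 hy0 hxy hzx hzy hzz
  refine ⟨hρ, ?_⟩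
  rw [norm_sub_inversion_mul_div_eq_one_add_inv_sinh_sq hx hz hx0 hz0 (hne hx hzx),
    norm_sub_inversion_mul_div_eq_one_add_inv_sinh_sq hy hz hy0 hz0 (hne hy hzy), hρ.1,
    rhoB_comm z y]

theorem semicircle_midpoint_construction_general (x y : ℂ)
    (hx1 : ‖x‖ < 1) (hy1 : ‖y‖ < 1) (hx0 : x ≠ 0) (hy0 : y ≠ 0)
    (hncol : ¬ Collinear ℝ ({0, x, y} : Set ℂ))
    (xstar ystar : ℂ)
    (hxstar : xstar = x / ((‖x‖ : ℂ) ^ 2))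
    (hystar : ystar = y / ((‖y‖ : ℂ) ^ 2))
    (a : ℂ) (ra : ℝ)
    (ha : a = Complex.I * (y * (1 + (‖x‖ : ℂ) ^ 2)
        - x * (1 + (‖y‖ : ℂ) ^ 2))
        / ((2 * (x.im * y.re - x.re * y.im) : ℝ) : ℂ))
    (hra : ra = ‖x - y‖ * ‖x * (‖y‖ : ℂ) ^ 2 - y‖
        / (2 * ‖y‖ * |x.re * y.im - x.im * y.re|))
    (hsemi : ‖xstar - ystar‖ = 2 * ra)
    (c : ℂ) (rc : ℝ)
    (hc0 : ‖0 - c‖ = rc) (hcx : ‖x - c‖ = rc)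
    (hcy : ‖y - c‖ = rc)
    (z z' : ℂ)
    (hz1 : z ∈ lineThrough 0 c) (hz2 : ‖z - a‖ = ra)
    (hz3 : ‖z‖ < 1)
    (hz'1 : z' ∈ lineThrough 0 c) (hz'2 : ‖z' - a‖ = ra)
    (hz'3 : 1 < ‖z'‖) :
    (rhoB x z = rhoB z y ∧ rhoB z y = rhoB x y / 2) ∧
    ‖c - a‖ ^ 2 = rc ^ 2 + ra ^ 2 ∧
    ‖z - xstar‖ * ‖x - z'‖
        / (‖z - x‖ * ‖xstar - z'‖)
      = ‖z - ystar‖ * ‖y - z'‖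
        / (‖z - y‖ * ‖ystar - z'‖) := by
  have hd := Complex.im_mul_re_sub_re_mul_im_ne_zero_of_not_collinear hx0 hncol
  obtain ⟨hxa, hya⟩ : ‖x‖ ^ 2 + 1 = 2 * ⟪x, a⟫ ∧ ‖y‖ ^ 2 + 1 = 2 * ⟪y, a⟫ :=
    ha ▸ two_inner_geodesicCenter hd
  have ha1 : ‖a‖ ^ 2 = 1 + ra ^ 2 := ha ▸ hra ▸ sq_norm_geodesicCenter hd
  have hra0 : 0 ≤ ra := by linarith [norm_nonneg (xstar - ystar)]
  have hsphere := fun w : ℂ ↦ norm_sub_eq_iff_sq_norm_add_one_eq (w := w) hra0 ha1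
  rw [Complex.div_ofReal_norm_sq_eq_inversion] at hxstar hystar
  subst hxstar hystar
  obtain ⟨hmid, hxy⟩ := add_inversion_eq_two_smul_and_inner_eq hx0 hy0 hra0 ha1 hxa hya hsemi
  have hc {w : ℂ} (hw : ‖w - c‖ = rc) : 2 * ⟪c, w⟫ = ‖w‖ ^ 2 :=
    two_inner_eq_sq_norm_of_norm_sub_eq_norm (by rw [hw, ← hc0, zero_sub, norm_neg])
  have hca := two_inner_eq_one_of_add_inversion_eq hx0 hy0 hmid (hc hcx) (hc hcy)
  obtain ⟨t, rfl⟩ := hz1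
  obtain ⟨t', rfl⟩ := hz'1
  simp only [zero_add, sub_zero] at hz2 hz3 hz'2 hz'3 ⊢
  obtain ⟨ht, hzz⟩ := one_lt_and_sq_norm_smul_eq hca ((hsphere _).1 hz2)
  have hz' : t' • c = inversion 0 1 (t • c) :=
    eq_inversion_of_eq_smul ((hsphere _).1 hz2) ((hsphere _).1 hz'2) (s := t' / t)
      (by rw [smul_smul, div_mul_cancel₀ _ (by linarith : t ≠ 0)])
      (by rintro h; rw [h] at hz'3; linarith)
  obtain ⟨hρ, hratio⟩ := rhoB_midpoint_and_absRatio_eq hx1 hy1 hz3 hx0 hy0 hxy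
    (by rw [real_inner_smul_left, mul_left_comm, hc hcx])
    (by rw [real_inner_smul_left, mul_left_comm, hc hcy]) hzz ht
  refine ⟨hρ, ?_, hz' ▸ hratio⟩
  rw [norm_sub_sq_real, ha1, ← hc0, zero_sub, norm_neg]
  linarith

/-- Suppose the arc of `S¹(a, r_a)` from `x*` to `y*` through `x` and `y` is a
semicircle, i.e. `|x* - y*| = 2 r_a`. Let `S¹(c, r_c)` be the circle through `0, x, y`,
let `z` be the intersection of the line through `0` and `c` with `S¹(a, r_a)` in `B²`,
and `z'` the other intersection point (outside the closed unit disk). Then `z` is the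
hyperbolic midpoint of `x` and `y`, the circles `S¹(c, r_c)` and `S¹(a, r_a)` are
orthogonal, and the absolute ratios satisfy `|z,x,x*,z'| = |z,y,y*,z'|`. -/
theorem semicircle_midpoint_construction (x y : ℂ)
    (hx1 : ‖x‖ < 1) (hy1 : ‖y‖ < 1) (hx0 : x ≠ 0) (hy0 : y ≠ 0)
    (hncol : ¬ Collinear ℝ ({0, x, y} : Set ℂ))
    (hxy : ‖x‖ ≠ ‖y‖)
    (xstar ystar : ℂ)
    (hxstar : xstar = x / ((‖x‖ : ℂ) ^ 2))
    (hystar : ystar = y / ((‖y‖ : ℂ) ^ 2))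
    (a : ℂ) (ra : ℝ)
    (ha : a = Complex.I * (y * (1 + (‖x‖ : ℂ) ^ 2)
        - x * (1 + (‖y‖ : ℂ) ^ 2))
        / ((2 * (x.im * y.re - x.re * y.im) : ℝ) : ℂ))
    (hra : ra = ‖x - y‖ * ‖x * (‖y‖ : ℂ) ^ 2 - y‖
        / (2 * ‖y‖ * |x.re * y.im - x.im * y.re|))
    (hsemi : ‖xstar - ystar‖ = 2 * ra)
    (c : ℂ) (rc : ℝ)
    (hc0 : ‖0 - c‖ = rc) (hcx : ‖x - c‖ = rc)
    (hcy : ‖y - c‖ = rc)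
    (z z' : ℂ)
    (hz1 : z ∈ lineThrough 0 c) (hz2 : ‖z - a‖ = ra)
    (hz3 : ‖z‖ < 1)
    (hz'1 : z' ∈ lineThrough 0 c) (hz'2 : ‖z' - a‖ = ra)
    (hz'3 : 1 < ‖z'‖) :
    (rhoB x z = rhoB z y ∧ rhoB z y = rhoB x y / 2) ∧
    ‖c - a‖ ^ 2 = rc ^ 2 + ra ^ 2 ∧
    ‖z - xstar‖ * ‖x - z'‖
        / (‖z - x‖ * ‖xstar - z'‖)
      = ‖z - ystar‖ * ‖y - z'‖
        / (‖z - y‖ * ‖ystar - z'‖) :=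
  semicircle_midpoint_construction_general x y hx1 hy1 hx0 hy0 hncol xstar ystar hxstar hystar a ra
    ha hra hsemi c rc hc0 hcx hcy z z' hz1 hz2 hz3 hz'1 hz'2 hz'3
end

section
/- Let −1 < x < y < 1 be real points of the unit disk, and set m = x + i√(1−x²) and n = y + i√(1−y²), the points of the unit circle vertically above x and y. Then the Euclidean line through m and the complex conjugate of n and the Euclidean line through the complex conjugate of m and n intersect in a real point z ∈ (−1,1), and z is the hyperbolic midpoint of x and y in B², i.e., ρ_{B²}(x,z) = ρ_{B²}(z,y) = ρ_{B²}(x,y)/2. -/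
/-!
Parametrise the diameter `(-1, 1)` by `x = tanh s`, i.e. `s = artanh x`. Then
`√(1 - x²) = 1 / cosh s`, so `sinh (ρ(x, y) / 2) = |sinh (s - t)|` and `ρ(x, y) = 2 |s - t|`:
the hyperbolic midpoint of `x` and `y` is `tanh ((s + t) / 2)`. By the half-angle formulas this
equals `(x √(1 - y²) + y √(1 - x²)) / (√(1 - x²) + √(1 - y²))`, which is exactly where the line
through `m` and `conj n` (at heights `√(1 - x²)` and `-√(1 - y²)`) crosses the real axis,
as does, by conjugation, the line through `conj m` and `n`.
-/

open Complex ComplexConjugate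

open Real Set

theorem ofReal_mem_lineThrough_of_im_ne {p q : ℂ} (h : p.im ≠ q.im) :
    (((p.re * q.im - q.re * p.im) / (q.im - p.im) : ℝ) : ℂ) ∈ lineThrough p q := by
  have h' : q.im - p.im ≠ 0 := sub_ne_zero.mpr h.symm
  refine ⟨p.im / (p.im - q.im), Complex.ext ?_ ?_⟩ <;>
    · simp only [add_re, add_im, smul_re, smul_im, sub_re, sub_im, ofReal_re, ofReal_im,
        smul_eq_mul]
      field_simp
      ring

theorem conj_mem_lineThrough {p q z : ℂ} (hz : z ∈ lineThrough p q) :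
    conj z ∈ lineThrough (conj p) (conj q) := by
  obtain ⟨t, rfl⟩ := hz
  exact ⟨t, by simp [Complex.real_smul]⟩

namespace Real

theorem sqrt_one_sub_sq_pos {x : ℝ} (hx : x ∈ Ioo (-1) 1) : 0 < √(1 - x ^ 2) :=
  sqrt_pos.mpr (by nlinarith [hx.1, hx.2])

theorem tanh_add_div_two (s t : ℝ) :
    tanh ((s + t) / 2) = (sinh s + sinh t) / (cosh s + cosh t) := by
  set u := (s + t) / 2
  set v := (s - t) / 2
  have hs : s = u + v := by ring
  have ht : t = u - v := by ring
  have hcosh : cosh s + cosh t = 2 * cosh u * cosh v := by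
    rw [hs, ht, cosh_add, cosh_sub]; ring
  rw [tanh_eq_sinh_div_cosh, hcosh, eq_div_iff (by positivity), hs, ht, sinh_add, sinh_sub]
  field_simp
  ring

theorem tanh_artanh_add_div_two {x y : ℝ} (hx : x ∈ Ioo (-1) 1) (hy : y ∈ Ioo (-1) 1) :
    tanh ((artanh x + artanh y) / 2) =
      (x * √(1 - y ^ 2) + y * √(1 - x ^ 2)) / (√(1 - x ^ 2) + √(1 - y ^ 2)) := by
  have ha := sqrt_one_sub_sq_pos hx
  have hb := sqrt_one_sub_sq_pos hy
  rw [tanh_add_div_two, sinh_artanh hx, sinh_artanh hy, cosh_artanh hx, cosh_artanh hy]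
  field_simp
  ring

end Real

theorem rhoB_ofReal (x z : ℝ) : rhoB (x : ℂ) (z : ℂ) =
    2 * arsinh (|x - z| / (√(1 - x ^ 2) * √(1 - z ^ 2))) := by
  simp only [rhoB, ← ofReal_sub, norm_real, Real.norm_eq_abs, sq_abs]

theorem rhoB_ofReal_eq_two_mul_abs_artanh_sub {x z : ℝ} (hx : x ∈ Ioo (-1) 1)
    (hz : z ∈ Ioo (-1) 1) : rhoB (x : ℂ) (z : ℂ) = 2 * |artanh x - artanh z| := by
  have ha := sqrt_one_sub_sq_pos hx
  have hc := sqrt_one_sub_sq_pos hz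
  have hsinh : Real.sinh (artanh x - artanh z) = (x - z) / (√(1 - x ^ 2) * √(1 - z ^ 2)) := by
    rw [Real.sinh_sub, sinh_artanh hx, sinh_artanh hz, cosh_artanh hx, cosh_artanh hz]
    field_simp
  rw [rhoB_ofReal, ← abs_of_pos (mul_pos ha hc), ← abs_div, ← hsinh, abs_sinh, arsinh_sinh]

/-- For real points `-1 < x < y < 1` of the unit disk, with `m = x + i√(1-x²)` and
`n = y + i√(1-y²)` the points of the unit circle above `x` and `y`, the line through
`m` and `conj n` and the line through `conj m` and `n` intersect in a real point
`z ∈ (-1, 1)` which is the hyperbolic midpoint of `x` and `y` in `B²`. -/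
theorem midpoint_on_diameter_B2 (x y : ℝ)
    (hx : -1 < x) (hxy : x < y) (hy : y < 1)
    (m n : ℂ)
    (hm : m = (x : ℂ) + (Real.sqrt (1 - x ^ 2) : ℂ) * Complex.I)
    (hn : n = (y : ℂ) + (Real.sqrt (1 - y ^ 2) : ℂ) * Complex.I) :
    ∃ z : ℝ, -1 < z ∧ z < 1 ∧
      (z : ℂ) ∈ lineThrough m (conj n) ∧ (z : ℂ) ∈ lineThrough (conj m) n ∧
      rhoB (x : ℂ) (z : ℂ) = rhoB (z : ℂ) (y : ℂ) ∧
      rhoB (z : ℂ) (y : ℂ) = rhoB (x : ℂ) (y : ℂ) / 2 := by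
  have hxI : x ∈ Ioo (-1) 1 := ⟨hx, hxy.trans hy⟩
  have hyI : y ∈ Ioo (-1) 1 := ⟨hx.trans hxy, hy⟩
  obtain ⟨z, hz⟩ : ∃ z, z = Real.tanh ((artanh x + artanh y) / 2) := ⟨_, rfl⟩
  have hzI : z ∈ Ioo (-1) 1 := hz ▸ ⟨Real.neg_one_lt_tanh _, Real.tanh_lt_one _⟩
  have hzt : artanh z = (artanh x + artanh y) / 2 := hz ▸ artanh_tanh _
  have hline : (z : ℂ) ∈ lineThrough m (conj n) := by
    have him : m.im ≠ (conj n).im := by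
      simp only [hm, hn, conj_im, add_im, mul_im, ofReal_re, ofReal_im, I_re, I_im]
      linarith [sqrt_one_sub_sq_pos hxI, sqrt_nonneg (1 - y ^ 2)]
    convert ofReal_mem_lineThrough_of_im_ne him using 3
    simp only [hz, tanh_artanh_add_div_two hxI hyI, hm, hn, conj_re, conj_im, add_re, add_im,
      mul_re, mul_im, ofReal_re, ofReal_im, I_re, I_im]
    rw [← neg_div_neg_eq]
    congr 1 <;> ring
  refine ⟨z, hzI.1, hzI.2, hline, by simpa using conj_mem_lineThrough hline, ?_, ?_⟩ <;>
    rw [rhoB_ofReal_eq_two_mul_abs_artanh_sub hzI hyI, hzt]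
  · rw [rhoB_ofReal_eq_two_mul_abs_artanh_sub hxI hzI, hzt]
    congr 2
    ring
  · rw [rhoB_ofReal_eq_two_mul_abs_artanh_sub hxI hyI,
      show (artanh x + artanh y) / 2 - artanh y = (artanh x - artanh y) / 2 by ring, abs_div,
      abs_two]
    ring
end
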